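/- arXiv:1603.04892 — 3 statements merged into one kernel-verified Lean document; each statement's English description precedes it below -/
import Mathlib

section
/- There is an absolute constant C > 0 such that for every integer k ≥ 2 and every k-decomposable permutation S = (s_1,…,s_n) of {1,…,n}, the lazy finger bound satisfies LF(S) ≤ C·n·log k. -/
/-- Binary trees with natural-number keys. -/
inductive BTree : Type where
  | leaf : BTree
  | node : BTree → ℕ → BTree → BTree

namespace BTree

/-- The set of keys appearing in the tree. -/
def keys : BTree → Finset ℕ
  | leaf => ∅
  | node l x r => keys l ∪ {x} ∪ keys r

/-- Binary search tree property: left keys smaller, right keys larger. -/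
def IsSearchTree : BTree → Prop
  | leaf => True
  | node l x r => (∀ y ∈ keys l, y < x) ∧ (∀ y ∈ keys r, x < y) ∧
      IsSearchTree l ∧ IsSearchTree r

/-- Depth of the key `y` (number of edges from the root), via the search path. -/
def depth : BTree → ℕ → ℕ
  | leaf, _ => 0
  | node l x r, y =>
      if y = x then 0
      else if y < x then depth l y + 1
      else depth r y + 1

/-- Number of edges on the path between the keys `a` and `b` (for a search tree). -/
def dist : BTree → ℕ → ℕ → ℕ
  | leaf, _, _ => 0
  | node l x r, a, b =>
      if a < x ∧ b < x then dist l a b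
      else if x < a ∧ x < b then dist r a b
      else depth (node l x r) a + depth (node l x r) b

/-- `T` is a binary search tree on the key set `{1, …, n}`. -/
def IsBSTOn (T : BTree) (n : ℕ) : Prop :=
  T.IsSearchTree ∧ T.keys = Finset.Icc 1 n

end BTree

/-- `KDecomp k S`: the sequence `S` (a list of distinct naturals whose value set is an
interval of integers) is `k`-decomposable: it is a single element, or it is the
concatenation of `2 ≤ d′ ≤ k` consecutive blocks, each of whose value sets is an
interval of integers (so that the blocks determine a skeleton permutation), and each
block is itself `k`-decomposable. -/
inductive KDecomp (k : ℕ) : List ℕ → Prop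
  | single (x : ℕ) : KDecomp k [x]
  | blocks (L : List (List ℕ)) (h2 : 2 ≤ L.length) (hk : L.length ≤ k)
      (hint : ∀ l ∈ L, l.Nodup ∧ ∃ a b : ℕ, a ≤ b ∧ l.toFinset = Finset.Icc a b)
      (hrec : ∀ l ∈ L, KDecomp k l) : KDecomp k L.flatten

/-- Lazy finger cost of serving a list of accesses in the fixed tree `T`:
the sum of the distances between consecutive accesses. -/
def lfCost (T : BTree) : List ℕ → ℕ
  | [] => 0
  | [_] => 0
  | a :: b :: rest => BTree.dist T a b + lfCost T (b :: rest)

/-- The lazy finger bound `LF(S)`: minimum over BSTs `T` on `{1,…,n}` of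
`∑_{j≥2} d_T(s_{j−1}, s_j)`. -/
noncomputable def LF (n : ℕ) (S : List ℕ) : ℕ :=
  sInf {c : ℕ | ∃ T : BTree, T.IsBSTOn n ∧ c = lfCost T S}

namespace BTree


@[simp] lemma keys_leaf : keys leaf = ∅ := rfl
@[simp] lemma keys_node (l x r) : keys (node l x r) = keys l ∪ {x} ∪ keys r := rfl

lemma mem_keys_node {y} {l x r} :
    y ∈ keys (node l x r) ↔ y ∈ keys l ∨ y = x ∨ y ∈ keys r := by
  simp [keys, or_assoc]; tauto

lemma dist_comm (T : BTree) (a b : ℕ) : dist T a b = dist T b a := by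
  induction T with
  | leaf => rfl
  | node l x r ihl ihr =>
    simp only [dist]
    by_cases h1 : a < x ∧ b < x
    · rw [if_pos h1, if_pos ⟨h1.2, h1.1⟩, ihl]
    · rw [if_neg h1, if_neg (fun (h : b < x ∧ a < x) => h1 ⟨h.2, h.1⟩)]
      by_cases h2 : x < a ∧ x < b
      · rw [if_pos h2, if_pos ⟨h2.2, h2.1⟩, ihr]
      · rw [if_neg h2, if_neg (fun (h : x < b ∧ x < a) => h2 ⟨h.2, h.1⟩), Nat.add_comm]

lemma dist_le_depth_add (T : BTree) (a b : ℕ) : dist T a b ≤ depth T a + depth T b := by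
  induction T with
  | leaf => simp [dist, depth]
  | node l x r ihl ihr =>
    simp only [dist]
    by_cases h1 : a < x ∧ b < x
    · rw [if_pos h1]
      have da : depth (node l x r) a = depth l a + 1 := by
        simp [depth, Nat.ne_of_lt h1.1, h1.1]
      have db : depth (node l x r) b = depth l b + 1 := by
        simp [depth, Nat.ne_of_lt h1.2, h1.2]
      rw [da, db]; omega
    · rw [if_neg h1]
      by_cases h2 : x < a ∧ x < b
      · rw [if_pos h2]
        have da : depth (node l x r) a = depth r a + 1 := by
          simp [depth, (Nat.ne_of_lt h2.1).symm, Nat.lt_asymm h2.1]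
        have db : depth (node l x r) b = depth r b + 1 := by
          simp [depth, (Nat.ne_of_lt h2.2).symm, Nat.lt_asymm h2.2]
        rw [da, db]; omega
      · rw [if_neg h2]

lemma depth_le_depth_add_dist (T : BTree) (m p : ℕ) :
    depth T p ≤ depth T m + dist T m p := by
  induction T with
  | leaf => simp [dist, depth]
  | node l x r ihl ihr =>
    simp only [dist]
    by_cases h1 : m < x ∧ p < x
    · rw [if_pos h1]
      have dp : depth (node l x r) p = depth l p + 1 := by
        simp [depth, Nat.ne_of_lt h1.2, h1.2]
      have dm : depth (node l x r) m = depth l m + 1 := by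
        simp [depth, Nat.ne_of_lt h1.1, h1.1]
      rw [dp, dm]; have := ihl; omega
    · rw [if_neg h1]
      by_cases h2 : x < m ∧ x < p
      · rw [if_pos h2]
        have dp : depth (node l x r) p = depth r p + 1 := by
          simp [depth, (Nat.ne_of_lt h2.2).symm, Nat.lt_asymm h2.2]
        have dm : depth (node l x r) m = depth r m + 1 := by
          simp [depth, (Nat.ne_of_lt h2.1).symm, Nat.lt_asymm h2.1]
        rw [dp, dm]; have := ihr; omega
      · rw [if_neg h2]; omega

@[simp] lemma depth_root (l x r) : depth (node l x r) x = 0 := by simp [depth]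

lemma depth_node_left {y l x r} (h : y < x) : depth (node l x r) y = depth l y + 1 := by
  simp [depth, Nat.ne_of_lt h, h]

lemma depth_node_right {y l x r} (h : x < y) : depth (node l x r) y = depth r y + 1 := by
  simp [depth, (Nat.ne_of_lt h).symm, Nat.lt_asymm h]

lemma dist_node_left {a b l x r} (ha : a < x) (hb : b < x) :
    dist (node l x r) a b = dist l a b := by
  simp [dist, ha, hb]

lemma dist_node_right {a b l x r} (ha : x < a) (hb : x < b) :
    dist (node l x r) a b = dist r a b := by
  have : ¬ (a < x ∧ b < x) := by omega
  simp [dist, this, ha, hb]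



/-- Remove the maximum key from a (nonempty) search tree; returns (rest, max). -/
def sMax : BTree → BTree × ℕ
  | leaf => (leaf, 0)
  | node l x leaf => (l, x)
  | node l x (node rl y rr) =>
      (node l x (sMax (node rl y rr)).1, (sMax (node rl y rr)).2)

lemma sMax_keys : ∀ T : BTree, T ≠ leaf → IsSearchTree T →
    keys (sMax T).1 ∪ {(sMax T).2} = keys T := by
  intro T
  induction T with
  | leaf => intro h; exact absurd rfl h
  | node l x r ihl ihr =>
    intro _ hT
    cases r with
    | leaf => simp [sMax, keys]
    | node rl y rr =>
      have := ihr (by simp) hT.2.2.2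
      simp only [sMax, keys_node]
      rw [Finset.union_assoc, Finset.union_assoc, this]
      simp [keys]

lemma sMax_mem {T : BTree} (hne : T ≠ leaf) (hT : IsSearchTree T) :
    (sMax T).2 ∈ keys T := by
  rw [← sMax_keys T hne hT]; simp

lemma sMax_dom : ∀ T : BTree, T ≠ leaf → IsSearchTree T →
    ∀ y ∈ keys T, y ≤ (sMax T).2 := by
  intro T
  induction T with
  | leaf => intro h; exact absurd rfl h
  | node l x r ihl ihr =>
    intro _ hT y hy
    cases r with
    | leaf =>
      simp only [sMax]
      rcases mem_keys_node.mp hy with h | h | h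
      · exact le_of_lt (hT.1 y h)
      · omega
      · simp [keys] at h
    | node rl y' rr =>
      have hm : (sMax (node rl y' rr)).2 ∈ keys (node rl y' rr) :=
        sMax_mem (by simp) hT.2.2.2
      have hxm : x < (sMax (node rl y' rr)).2 := hT.2.1 _ hm
      simp only [sMax]
      rcases mem_keys_node.mp hy with h | h | h
      · have := hT.1 y h; omega
      · omega
      · exact ihr (by simp) hT.2.2.2 y h

lemma sMax_not_mem : ∀ T : BTree, T ≠ leaf → IsSearchTree T →
    (sMax T).2 ∉ keys (sMax T).1 := by
  intro T
  induction T with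
  | leaf => intro h; exact absurd rfl h
  | node l x r ihl ihr =>
    intro _ hT
    cases r with
    | leaf =>
      simp only [sMax]
      intro h; exact absurd (hT.1 x h) (lt_irrefl x)
    | node rl y' rr =>
      have hm : (sMax (node rl y' rr)).2 ∈ keys (node rl y' rr) :=
        sMax_mem (by simp) hT.2.2.2
      have hxm : x < (sMax (node rl y' rr)).2 := hT.2.1 _ hm
      simp only [sMax]
      intro h
      rcases mem_keys_node.mp h with h | h | h
      · have := hT.1 _ h; omega
      · omega
      · exact ihr (by simp) hT.2.2.2 h

lemma sMax_search : ∀ T : BTree, T ≠ leaf → IsSearchTree T →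
    IsSearchTree (sMax T).1 := by
  intro T
  induction T with
  | leaf => intro h; exact absurd rfl h
  | node l x r ihl ihr =>
    intro _ hT
    cases r with
    | leaf => exact hT.2.2.1
    | node rl y' rr =>
      have hsub : keys (sMax (node rl y' rr)).1 ⊆ keys (node rl y' rr) := by
        rw [← sMax_keys (node rl y' rr) (by simp) hT.2.2.2]
        exact Finset.subset_union_left
      refine ⟨hT.1, fun y hy => hT.2.1 y (hsub hy), hT.2.2.1,
        ihr (by simp) hT.2.2.2⟩

lemma sMax_depth : ∀ T : BTree, T ≠ leaf → IsSearchTree T →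
    ∀ y ∈ keys (sMax T).1, depth (sMax T).1 y ≤ depth T y := by
  intro T
  induction T with
  | leaf => intro h; exact absurd rfl h
  | node l x r ihl ihr =>
    intro _ hT y hy
    cases r with
    | leaf =>
      simp only [sMax] at hy ⊢
      have hyx : y < x := hT.1 y hy
      rw [depth_node_left hyx]; omega
    | node rl y' rr =>
      simp only [sMax] at hy ⊢
      rcases Nat.lt_trichotomy y x with h | h | h
      · rw [depth_node_left h, depth_node_left h]
      · subst h; simp
      · rw [depth_node_right h, depth_node_right h]
        have hy' : y ∈ keys (sMax (node rl y' rr)).1 := by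
          rcases mem_keys_node.mp hy with h' | h' | h'
          · have := hT.1 y h'; omega
          · omega
          · exact h'
        exact Nat.add_le_add_right (ihr (by simp) hT.2.2.2 y hy') 1

lemma sMax_dist : ∀ T : BTree, T ≠ leaf → IsSearchTree T →
    ∀ a b, a ∈ keys (sMax T).1 → b ∈ keys (sMax T).1 →
    dist (sMax T).1 a b ≤ dist T a b := by
  intro T
  induction T with
  | leaf => intro h; exact absurd rfl h
  | node l x r ihl ihr =>
    intro hne hT a b ha hb
    cases r with
    | leaf =>
      simp only [sMax] at ha hb ⊢
      have hax : a < x := hT.1 a ha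
      have hbx : b < x := hT.1 b hb
      rw [dist_node_left hax hbx]
    | node rl y' rr =>
      simp only [sMax] at ha hb ⊢
      by_cases h1 : a < x ∧ b < x
      · rw [dist_node_left h1.1 h1.2, dist_node_left h1.1 h1.2]
      · by_cases h2 : x < a ∧ x < b
        · rw [dist_node_right h2.1 h2.2, dist_node_right h2.1 h2.2]
          have ha' : a ∈ keys (sMax (node rl y' rr)).1 := by
            rcases mem_keys_node.mp ha with h' | h' | h'
            · have := hT.1 a h'; omega
            · omega
            · exact h'
          have hb' : b ∈ keys (sMax (node rl y' rr)).1 := by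
            rcases mem_keys_node.mp hb with h' | h' | h'
            · have := hT.1 b h'; omega
            · omega
            · exact h'
          exact ihr (by simp) hT.2.2.2 a b ha' hb'
        · have e1 : dist (node l x (sMax (node rl y' rr)).1) a b =
              depth (node l x (sMax (node rl y' rr)).1) a +
              depth (node l x (sMax (node rl y' rr)).1) b := by
            simp only [dist]; rw [if_neg h1, if_neg h2]
          have e2 : dist (node l x (node rl y' rr)) a b =
              depth (node l x (node rl y' rr)) a +
              depth (node l x (node rl y' rr)) b := by
            simp only [dist]; rw [if_neg h1, if_neg h2]
          rw [e1, e2]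
          have hda := sMax_depth (node l x (node rl y' rr)) hne hT a
            (by simpa only [sMax] using ha)
          have hdb := sMax_depth (node l x (node rl y' rr)) hne hT b
            (by simpa only [sMax] using hb)
          simp only [sMax] at hda hdb
          omega



def KLT (A B : BTree) : Prop := ∀ x ∈ keys A, ∀ y ∈ keys B, x < y

/-- Balanced combine of a list of trees (in increasing key order), also returning
the set of keys used as internal "router" nodes. -/
def combineJK : List BTree → BTree × Finset ℕ
  | [] => (leaf, ∅)
  | [T] => (T, ∅)
  | T₁ :: T₂ :: rest =>
      let A := combineJK ((T₁ :: T₂ :: rest).take ((rest.length + 2) / 2))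
      let B := combineJK ((T₁ :: T₂ :: rest).drop ((rest.length + 2) / 2))
      (node (sMax A.1).1 (sMax A.1).2 B.1, A.2 ∪ B.2 ∪ {(sMax A.1).2})
  termination_by L => L.length
  decreasing_by
    · simp [List.length_take]; omega
    · simp [List.length_drop]

structure CSpec (L : List BTree) : Prop where
  ne : (combineJK L).1 ≠ leaf
  search : IsSearchTree (combineJK L).1
  keys_iff : ∀ x, x ∈ keys (combineJK L).1 ↔ ∃ T ∈ L, x ∈ keys T
  depth_mem : ∀ T ∈ L, ∀ x ∈ keys T,
      depth (combineJK L).1 x ≤ depth T x + Nat.clog 2 L.length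
  depth_jk : ∀ x ∈ (combineJK L).2, depth (combineJK L).1 x ≤ Nat.clog 2 L.length
  dist_mem : ∀ T ∈ L, ∀ a b, a ∈ keys T → b ∈ keys T →
      a ∉ (combineJK L).2 → b ∉ (combineJK L).2 →
      dist (combineJK L).1 a b ≤ dist T a b
  jk_sub : (combineJK L).2 ⊆ keys (combineJK L).1
  jk_dom : ∀ x ∈ (combineJK L).2, ∀ T ∈ L, x ∈ keys T → ∀ y ∈ keys T, y ≤ x
  max_cases : ∀ T ∈ L, (sMax T).2 ∈ (combineJK L).2 ∨
      (∀ y ∈ keys (combineJK L).1, y ≤ (sMax T).2)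

lemma combine_spec : ∀ (n : ℕ) (L : List BTree), L.length ≤ n → L ≠ [] →
    (∀ T ∈ L, T ≠ leaf ∧ IsSearchTree T) → L.Pairwise KLT → CSpec L := by
  intro n
  induction n with
  | zero =>
    intro L h hne
    cases L with
    | nil => exact absurd rfl hne
    | cons a l => simp at h
  | succ n ih =>
    intro L hlen hne hAll hPW
    match L with
    | [T] =>
      have hT := hAll T (by simp)
      have hC : combineJK [T] = (T, ∅) := by rw [combineJK]
      refine ⟨?_, ?_, ?_, ?_, ?_, ?_, ?_, ?_, ?_⟩ <;> rw [hC]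
      · exact hT.1
      · exact hT.2
      · simp
      · intro T' hT' x hx
        simp at hT'; subst hT'; exact Nat.le_add_right _ _
      · simp
      · intro T' hT' a b ha hb _ _
        simp at hT'; subst hT'; exact le_refl _
      · simp
      · simp
      · intro T' hT'
        simp at hT'; subst hT'
        exact Or.inr (sMax_dom T' hT.1 hT.2)
    | T₁ :: T₂ :: rest =>
      set m2 := (rest.length + 2) / 2 with hm2
      set L' := T₁ :: T₂ :: rest with hL'
      set L1 := L'.take m2 with hL1
      set L2 := L'.drop m2 with hL2
      have hlenL : L'.length = rest.length + 2 := by simp [hL']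
      have hL1len : L1.length = m2 := by
        simp [hL1, List.length_take, hlenL]; omega
      have hL2len : L2.length = (rest.length + 3) / 2 := by
        simp [hL2, List.length_drop, hlenL]; omega
      have hm2pos : 1 ≤ m2 := by omega
      have hm2lt : m2 < rest.length + 2 := by omega
      have hmem1 : ∀ T ∈ L1, T ∈ L' := fun T hT => List.mem_of_mem_take hT
      have hmem2 : ∀ T ∈ L2, T ∈ L' := fun T hT => List.mem_of_mem_drop hT
      have hsplit : L1 ++ L2 = L' := List.take_append_drop m2 L'
      have hmem12 : ∀ T ∈ L', T ∈ L1 ∨ T ∈ L2 := by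
        intro T hT
        rw [← hsplit] at hT
        exact List.mem_append.mp hT
      have hPW' : (L1 ++ L2).Pairwise KLT := by rw [hsplit]; exact hPW
      have hPWsplit := List.pairwise_append.mp hPW'
      have hcross : ∀ Ta ∈ L1, ∀ Tb ∈ L2, KLT Ta Tb := hPWsplit.2.2
      have SA : CSpec L1 := by
        refine ih L1 (by omega) ?_ (fun T hT => hAll T (hmem1 T hT)) hPWsplit.1
        intro h
        rw [h] at hL1len; simp at hL1len; omega
      have SB : CSpec L2 := by
        refine ih L2 (by omega) ?_ (fun T hT => hAll T (hmem2 T hT)) hPWsplit.2.1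
        intro h
        rw [h] at hL2len; simp at hL2len; omega
      set A := combineJK L1 with hA
      set B := combineJK L2 with hB
      set gm := (sMax A.1).2 with hgm
      set A' := (sMax A.1).1 with hA'
      have hC : combineJK L' = (node A' gm B.1, A.2 ∪ B.2 ∪ {gm}) := by
        rw [hL', combineJK]
      -- basic facts about A
      have hAkeys : keys A' ∪ {gm} = keys A.1 := sMax_keys A.1 SA.ne SA.search
      have hgmmem : gm ∈ keys A.1 := sMax_mem SA.ne SA.search
      have hgmdom : ∀ y ∈ keys A.1, y ≤ gm := sMax_dom A.1 SA.ne SA.search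
      have hgmnm : gm ∉ keys A' := sMax_not_mem A.1 SA.ne SA.search
      have hA'search : IsSearchTree A' := sMax_search A.1 SA.ne SA.search
      have hA'depth := sMax_depth A.1 SA.ne SA.search
      have hA'dist := sMax_dist A.1 SA.ne SA.search
      have hA'mem : ∀ x ∈ keys A.1, x ≠ gm → x ∈ keys A' := by
        intro x hx hxne
        rw [← hAkeys] at hx
        rcases Finset.mem_union.mp hx with h | h
        · exact h
        · simp at h; omega
      have hgmltB : ∀ y ∈ keys B.1, gm < y := by
        intro y hy
        obtain ⟨Ta, hTa, hga⟩ := (SA.keys_iff gm).mp hgmmem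
        obtain ⟨Tb, hTb, hyb⟩ := (SB.keys_iff y).mp hy
        exact hcross Ta hTa Tb hTb gm hga y hyb
      -- clog facts
      have hclog : Nat.clog 2 (rest.length + 2) = Nat.clog 2 ((rest.length + 3) / 2) + 1 := by
        have e : (rest.length + 2 + 2 - 1) / 2 = (rest.length + 3) / 2 := by omega
        rw [Nat.clog_of_two_le one_lt_two (by omega), e]
      have hcl1 : Nat.clog 2 L1.length + 1 ≤ Nat.clog 2 L'.length := by
        rw [hlenL, hclog, hL1len]
        have : m2 ≤ (rest.length + 3) / 2 := by omega
        exact Nat.add_le_add_right (Nat.clog_mono_right 2 this) 1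
      have hcl2 : Nat.clog 2 L2.length + 1 ≤ Nat.clog 2 L'.length := by
        rw [hlenL, hclog, hL2len]
      -- keys of combined tree
      have hkeysC : ∀ x, x ∈ keys (node A' gm B.1) ↔ x ∈ keys A.1 ∨ x ∈ keys B.1 := by
        intro x
        rw [mem_keys_node]
        constructor
        · rintro (h | h | h)
          · left; rw [← hAkeys]; exact Finset.mem_union.mpr (Or.inl h)
          · left; rw [h]; exact hgmmem
          · right; exact h
        · rintro (h | h)
          · by_cases hx : x = gm
            · exact Or.inr (Or.inl hx)
            · exact Or.inl (hA'mem x h hx)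
          · exact Or.inr (Or.inr h)
      refine ⟨?_, ?_, ?_, ?_, ?_, ?_, ?_, ?_, ?_⟩ <;> rw [hC]
      · intro h; cases h
      · refine ⟨?_, hgmltB, hA'search, SB.search⟩
        intro y hy
        have : y ∈ keys A.1 := by rw [← hAkeys]; exact Finset.mem_union.mpr (Or.inl hy)
        have := hgmdom y this
        have : y ≠ gm := fun h => hgmnm (h ▸ hy)
        omega
      · intro x
        rw [hkeysC]
        constructor
        · rintro (h | h)
          · obtain ⟨T, hT, hx⟩ := (SA.keys_iff x).mp h
            exact ⟨T, hmem1 T hT, hx⟩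
          · obtain ⟨T, hT, hx⟩ := (SB.keys_iff x).mp h
            exact ⟨T, hmem2 T hT, hx⟩
        · rintro ⟨T, hT, hx⟩
          rcases hmem12 T hT with h | h
          · exact Or.inl ((SA.keys_iff x).mpr ⟨T, h, hx⟩)
          · exact Or.inr ((SB.keys_iff x).mpr ⟨T, h, hx⟩)
      · -- depth_mem
        intro T hT x hx
        rcases hmem12 T hT with h | h
        · have hxA : x ∈ keys A.1 := (SA.keys_iff x).mpr ⟨T, h, hx⟩
          by_cases hxg : x = gm
          · rw [hxg]; simp
          · have hxA' : x ∈ keys A' := hA'mem x hxA hxg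
            have hxlt : x < gm := lt_of_le_of_ne (hgmdom x hxA) hxg
            rw [depth_node_left hxlt]
            have h1 : depth A' x ≤ depth A.1 x := hA'depth x hxA'
            have h2 : depth A.1 x ≤ depth T x + Nat.clog 2 L1.length :=
              SA.depth_mem T h x hx
            omega
        · have hxB : x ∈ keys B.1 := (SB.keys_iff x).mpr ⟨T, h, hx⟩
          have hxgt : gm < x := hgmltB x hxB
          rw [depth_node_right hxgt]
          have h2 : depth B.1 x ≤ depth T x + Nat.clog 2 L2.length :=
            SB.depth_mem T h x hx
          omega
      · -- depth_jk
        intro x hx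
        rcases Finset.mem_union.mp hx with hx | hx
        · rcases Finset.mem_union.mp hx with hx | hx
          · have hxA : x ∈ keys A.1 := SA.jk_sub hx
            by_cases hxg : x = gm
            · rw [hxg]; simp
            · have hxlt : x < gm := lt_of_le_of_ne (hgmdom x hxA) hxg
              rw [depth_node_left hxlt]
              have h1 : depth A' x ≤ depth A.1 x := hA'depth x (hA'mem x hxA hxg)
              have h2 : depth A.1 x ≤ Nat.clog 2 L1.length := SA.depth_jk x hx
              omega
          · have hxB : x ∈ keys B.1 := SB.jk_sub hx
            have hxgt : gm < x := hgmltB x hxB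
            rw [depth_node_right hxgt]
            have h2 : depth B.1 x ≤ Nat.clog 2 L2.length := SB.depth_jk x hx
            omega
        · simp at hx; rw [hx]; simp
      · -- dist_mem
        intro T hT a b ha hb hna hnb
        have hna' : a ∉ A.2 := fun h => hna (by simp [Finset.mem_union]; tauto)
        have hnb' : b ∉ A.2 := fun h => hnb (by simp [Finset.mem_union]; tauto)
        have hna2 : a ∉ B.2 := fun h => hna (by simp [Finset.mem_union]; tauto)
        have hnb2 : b ∉ B.2 := fun h => hnb (by simp [Finset.mem_union]; tauto)
        have hnag : a ≠ gm := fun h => hna (by simp [Finset.mem_union, h])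
        have hnbg : b ≠ gm := fun h => hnb (by simp [Finset.mem_union, h])
        rcases hmem12 T hT with h | h
        · have haA : a ∈ keys A.1 := (SA.keys_iff a).mpr ⟨T, h, ha⟩
          have hbA : b ∈ keys A.1 := (SA.keys_iff b).mpr ⟨T, h, hb⟩
          have halt : a < gm := lt_of_le_of_ne (hgmdom a haA) hnag
          have hblt : b < gm := lt_of_le_of_ne (hgmdom b hbA) hnbg
          rw [dist_node_left halt hblt]
          calc dist A' a b ≤ dist A.1 a b :=
                hA'dist a b (hA'mem a haA hnag) (hA'mem b hbA hnbg)
            _ ≤ dist T a b := SA.dist_mem T h a b ha hb hna' hnb'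
        · have haB : a ∈ keys B.1 := (SB.keys_iff a).mpr ⟨T, h, ha⟩
          have hbB : b ∈ keys B.1 := (SB.keys_iff b).mpr ⟨T, h, hb⟩
          rw [dist_node_right (hgmltB a haB) (hgmltB b hbB)]
          exact SB.dist_mem T h a b ha hb hna2 hnb2
      · -- jk_sub
        intro x hx
        rw [hkeysC]
        rcases Finset.mem_union.mp hx with hx | hx
        · rcases Finset.mem_union.mp hx with hx | hx
          · exact Or.inl (SA.jk_sub hx)
          · exact Or.inr (SB.jk_sub hx)
        · simp at hx; rw [hx]; exact Or.inl hgmmem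
      · -- jk_dom
        intro x hx T hT hxT y hy
        rcases hmem12 T hT with h | h
        · rcases Finset.mem_union.mp hx with hx | hx
          · rcases Finset.mem_union.mp hx with hx | hx
            · exact SA.jk_dom x hx T h hxT y hy
            · -- x ∈ B.2 but x ∈ keys T, T ∈ L1 : contradiction
              have hxB : x ∈ keys B.1 := SB.jk_sub hx
              obtain ⟨Tb, hTb, hxb⟩ := (SB.keys_iff x).mp hxB
              have := hcross T h Tb hTb x hxT x hxb
              omega
          · simp at hx; subst hx
            have : y ∈ keys A.1 := (SA.keys_iff y).mpr ⟨T, h, hy⟩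
            exact hgmdom y this
        · rcases Finset.mem_union.mp hx with hx | hx
          · rcases Finset.mem_union.mp hx with hx | hx
            · have hxA : x ∈ keys A.1 := SA.jk_sub hx
              obtain ⟨Ta, hTa, hxa⟩ := (SA.keys_iff x).mp hxA
              have := hcross Ta hTa T h x hxa x hxT
              omega
            · exact SB.jk_dom x hx T h hxT y hy
          · simp at hx; subst hx
            obtain ⟨Ta, hTa, hxa⟩ := (SA.keys_iff gm).mp hgmmem
            have := hcross Ta hTa T h gm hxa gm hxT
            omega
      · -- max_cases
        intro T hT
        have hTprop := hAll T hT
        have hmx : (sMax T).2 ∈ keys T := sMax_mem hTprop.1 hTprop.2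
        rcases hmem12 T hT with h | h
        · rcases SA.max_cases T h with hc | hc
          · exact Or.inl (by simp [Finset.mem_union]; tauto)
          · left
            have h1 : gm ≤ (sMax T).2 := hc gm hgmmem
            have h2 : (sMax T).2 ≤ gm := hgmdom _ ((SA.keys_iff _).mpr ⟨T, h, hmx⟩)
            have : (sMax T).2 = gm := le_antisymm h2 h1
            simp [Finset.mem_union, this]
        · rcases SB.max_cases T h with hc | hc
          · exact Or.inl (by simp [Finset.mem_union]; tauto)
          · right
            intro y hy
            rcases (hkeysC y).mp hy with hyA | hyB
            · obtain ⟨Ta, hTa, hya⟩ := (SA.keys_iff y).mp hyA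
              exact le_of_lt (hcross Ta hTa T h y hya _ hmx)
            · exact hc y hyB


end BTree

open BTree in
lemma lfCost_cons_cons (T : BTree) (a b : ℕ) (rest : List ℕ) :
    lfCost T (a :: b :: rest) = BTree.dist T a b + lfCost T (b :: rest) := rfl

lemma headI_append {A B : List ℕ} (h : A ≠ []) : (A ++ B).headI = A.headI := by
  cases A with
  | nil => exact absurd rfl h
  | cons a A' => rfl

lemma getLastI_cons_ne {a : ℕ} {l : List ℕ} (h : l ≠ []) :
    (a :: l).getLastI = l.getLastI := by
  cases l with
  | nil => exact absurd rfl h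
  | cons b l' =>
    rw [List.getLastI_eq_getLast?, List.getLastI_eq_getLast?, List.getLast?_cons_cons]

lemma getLastI_append {A B : List ℕ} (h : B ≠ []) : (A ++ B).getLastI = B.getLastI := by
  induction A with
  | nil => rfl
  | cons a A' ih =>
    have hne : A' ++ B ≠ [] := by
      simp only [ne_eq, List.append_eq_nil_iff]
      rintro ⟨-, hB⟩; exact h hB
    rw [List.cons_append, getLastI_cons_ne hne, ih]

lemma lfCost_append (T : BTree) :
    ∀ (A B : List ℕ), A ≠ [] → B ≠ [] →
    lfCost T (A ++ B) = lfCost T A + BTree.dist T A.getLastI B.headI + lfCost T B := by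
  intro A
  induction A with
  | nil => intro B h; exact absurd rfl h
  | cons a A' ih =>
    intro B _ hB
    cases A' with
    | nil =>
      cases B with
      | nil => exact absurd rfl hB
      | cons b bs => simp [lfCost, List.getLastI, List.headI, lfCost_cons_cons]
    | cons a2 as =>
      have h1 : (a :: a2 :: as) ++ B = a :: ((a2 :: as) ++ B) := rfl
      rw [h1]
      have h2 : (a2 :: as) ++ B = a2 :: (as ++ B) := rfl
      rw [h2, lfCost_cons_cons, ← h2, ih B (by simp) hB, lfCost_cons_cons,
        getLastI_cons_ne (by simp : (a2 :: as) ≠ [])]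
      ring

lemma lfCost_mono_of (T T' : BTree) (m : ℕ) :
    ∀ l : List ℕ, m ∉ l →
    (∀ a b, a ∈ l → b ∈ l → a ≠ m → b ≠ m → BTree.dist T a b ≤ BTree.dist T' a b) →
    lfCost T l ≤ lfCost T' l := by
  intro l
  induction l with
  | nil => intro _ _; exact le_refl _
  | cons a l' ih =>
    intro hm hd
    cases l' with
    | nil => exact le_refl _
    | cons b rest =>
      rw [lfCost_cons_cons, lfCost_cons_cons]
      have hane : a ≠ m := fun h => hm (by simp [h])
      have hbne : b ≠ m := fun h => hm (by simp [h])
      have h1 := hd a b (by simp) (by simp) hane hbne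
      have h2 := ih (fun h => hm (List.mem_cons_of_mem a h))
        (fun x y hx hy hxm hym => hd x y (List.mem_cons_of_mem a hx)
          (List.mem_cons_of_mem a hy) hxm hym)
      omega

lemma lfCost_pairs (T T' : BTree) (m c : ℕ) :
    ∀ l : List ℕ, l.Nodup →
    (∀ a b, a ∈ l → b ∈ l → a ≠ m → b ≠ m → BTree.dist T a b ≤ BTree.dist T' a b) →
    (∀ a b, a ∈ l → b ∈ l → BTree.dist T a b ≤ BTree.dist T' a b + c) →
    lfCost T l ≤ lfCost T' l + c + c := by
  intro l
  induction l with
  | nil => intro _ _ _; simp [lfCost]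
  | cons a l' ih =>
    intro hnd hd hdc
    cases l' with
    | nil => simp [lfCost]
    | cons b rest =>
      have hsubd : ∀ x y, x ∈ b :: rest → y ∈ b :: rest → x ≠ m → y ≠ m →
          BTree.dist T x y ≤ BTree.dist T' x y := fun x y hx hy hxm hym =>
        hd x y (List.mem_cons_of_mem a hx) (List.mem_cons_of_mem a hy) hxm hym
      by_cases ham : a = m
      · -- m not in tail
        have hmt : m ∉ b :: rest := by
          have := hnd; rw [List.nodup_cons] at this
          rw [← ham]; exact this.1
        have h1 := hdc a b (by simp) (by simp)
        have h2 := lfCost_mono_of T T' m (b :: rest) hmt hsubd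
        rw [lfCost_cons_cons, lfCost_cons_cons]
        omega
      · by_cases hbm : b = m
        · have h1 := hdc a b (by simp) (by simp)
          have hmt : m ∉ rest := by
            have := hnd
            rw [List.nodup_cons, List.nodup_cons] at this
            rw [← hbm]; exact this.2.1
          cases rest with
          | nil =>
            rw [lfCost_cons_cons, lfCost_cons_cons]
            simp [lfCost]; omega
          | cons r rs =>
            have h2 := hdc b r (by simp) (by simp)
            have h3 := lfCost_mono_of T T' m (r :: rs) hmt
              (fun x y hx hy hxm hym => hsubd x y (List.mem_cons_of_mem b hx)
                (List.mem_cons_of_mem b hy) hxm hym)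
            rw [lfCost_cons_cons T a, lfCost_cons_cons T b, lfCost_cons_cons T' a,
              lfCost_cons_cons T' b]
            omega
        · have h1 := hd a b (by simp) (by simp) ham hbm
          have h2 := ih (List.Nodup.of_cons hnd) hsubd
            (fun x y hx hy => hdc x y (List.mem_cons_of_mem a hx)
              (List.mem_cons_of_mem a hy))
          rw [lfCost_cons_cons, lfCost_cons_cons]
          omega

lemma flatten_map_ne_nil (P : List (List ℕ × BTree)) (hP : P ≠ [])
    (hne : ∀ p ∈ P, p.1 ≠ []) : (P.map Prod.fst).flatten ≠ [] := by
  cases P with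
  | nil => exact absurd rfl hP
  | cons p P' =>
    have h1 : p.1 ≠ [] := hne p (by simp)
    simp only [List.map_cons, List.flatten_cons, ne_eq, List.append_eq_nil_iff]
    rintro ⟨h, -⟩; exact h1 h

lemma chain_bound (T : BTree) (c h e : List ℕ × BTree → ℕ) :
    ∀ P : List (List ℕ × BTree), P ≠ [] → (∀ p ∈ P, p.1 ≠ []) →
    (∀ p ∈ P, lfCost T p.1 ≤ c p) →
    (∀ p ∈ P, BTree.depth T p.1.headI ≤ h p) →
    (∀ p ∈ P, BTree.depth T p.1.getLastI ≤ e p) →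
    lfCost T (P.map Prod.fst).flatten + BTree.depth T (P.map Prod.fst).flatten.headI
      + BTree.depth T (P.map Prod.fst).flatten.getLastI
      ≤ (P.map fun p => c p + h p + e p).sum := by
  intro P
  induction P with
  | nil => intro hP; exact absurd rfl hP
  | cons p P' ih =>
    intro _ hne hc hh he
    cases P' with
    | nil =>
      simp only [List.map_cons, List.map_nil, List.flatten_cons, List.flatten_nil,
        List.append_nil, List.sum_cons, List.sum_nil, add_zero]
      have h1 := hc p (by simp)
      have h2 := hh p (by simp)
      have h3 := he p (by simp)
      omega
    | cons q P'' =>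
      have hP'ne : (q :: P'') ≠ [] := by simp
      have hne' : ∀ r ∈ q :: P'', r.1 ≠ [] := fun r hr => hne r (List.mem_cons_of_mem p hr)
      have hflatne : ((q :: P'').map Prod.fst).flatten ≠ [] :=
        flatten_map_ne_nil _ hP'ne hne'
      have hp1ne : p.1 ≠ [] := hne p (by simp)
      have hflat : ((p :: q :: P'').map Prod.fst).flatten
          = p.1 ++ ((q :: P'').map Prod.fst).flatten := rfl
      rw [hflat, lfCost_append T _ _ hp1ne hflatne, headI_append hp1ne,
        getLastI_append hflatne]
      have hIH := ih hP'ne hne'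
        (fun r hr => hc r (List.mem_cons_of_mem p hr))
        (fun r hr => hh r (List.mem_cons_of_mem p hr))
        (fun r hr => he r (List.mem_cons_of_mem p hr))
      have h1 := hc p (by simp)
      have h2 := hh p (by simp)
      have h3 := he p (by simp)
      have hdist := BTree.dist_le_depth_add T p.1.getLastI
        ((q :: P'').map Prod.fst).flatten.headI
      have hsum : (List.map (fun p => c p + h p + e p) (p :: q :: P'')).sum
          = (c p + h p + e p) + (List.map (fun p => c p + h p + e p) (q :: P'')).sum := by
        rw [List.map_cons, List.sum_cons]
      rw [hsum]
      omega

lemma headI_mem {l : List ℕ} (h : l ≠ []) : l.headI ∈ l := by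
  cases l with
  | nil => exact absurd rfl h
  | cons a t => simp

lemma getLastI_mem : ∀ {l : List ℕ}, l ≠ [] → l.getLastI ∈ l := by
  intro l
  induction l with
  | nil => intro h; exact absurd rfl h
  | cons a t ih =>
    intro _
    cases t with
    | nil => simp [List.getLastI]
    | cons b t' =>
      rw [getLastI_cons_ne (by simp)]
      exact List.mem_cons_of_mem a (ih (by simp))

lemma sum_map_add {α : Type} (f g : α → ℕ) (l : List α) :
    (l.map fun x => f x + g x).sum = (l.map f).sum + (l.map g).sum := by
  induction l with
  | nil => simp
  | cons a t ih => simp [ih]; omega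

lemma sum_map_two {α : Type} (f : α → ℕ) (l : List α) :
    (l.map fun x => 2 * f x).sum = 2 * (l.map f).sum := by
  induction l with
  | nil => simp
  | cons a t ih => simp [ih]; omega

lemma sum_map_const {α : Type} (B : ℕ) (l : List α) :
    (l.map fun _ => B).sum = l.length * B := by
  induction l with
  | nil => simp
  | cons a t ih => simp [ih]; ring

lemma sum_map_mulB {α : Type} (B : ℕ) (f : α → ℕ) (l : List α) :
    (l.map fun x => B * f x).sum = B * (l.map f).sum := by
  induction l with
  | nil => simp
  | cons a t ih => simp [ih]; ring

lemma sum_le_sum_map {α : Type} (f g : α → ℕ) (l : List α)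
    (h : ∀ x ∈ l, f x ≤ g x) : (l.map f).sum ≤ (l.map g).sum := by
  induction l with
  | nil => simp
  | cons a t ih =>
    simp only [List.map_cons, List.sum_cons]
    have h1 := h a (by simp)
    have h2 := ih (fun x hx => h x (List.mem_cons_of_mem a hx))
    omega

lemma getLastI_flatten (P : List (List ℕ × BTree)) (hP : P ≠ [])
    (hne : ∀ p ∈ P, p.1 ≠ []) :
    ∃ p ∈ P, (P.map Prod.fst).flatten.getLastI = p.1.getLastI := by
  induction P with
  | nil => exact absurd rfl hP
  | cons p P' ih =>
    cases P' with
    | nil =>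
      refine ⟨p, by simp, ?_⟩
      show (p.1 ++ ([] : List (List ℕ)).flatten).getLastI = p.1.getLastI
      simp
    | cons q P'' =>
      have hne' : ∀ r ∈ q :: P'', r.1 ≠ [] := fun r hr => hne r (List.mem_cons_of_mem p hr)
      have hflatne : ((q :: P'').map Prod.fst).flatten ≠ [] :=
        flatten_map_ne_nil _ (by simp) hne'
      obtain ⟨r, hr, hrl⟩ := ih (by simp) hne'
      refine ⟨r, List.mem_cons_of_mem p hr, ?_⟩
      have hflat : ((p :: q :: P'').map Prod.fst).flatten
          = p.1 ++ ((q :: P'').map Prod.fst).flatten := rfl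
      rw [hflat, getLastI_append hflatne, hrl]

/-- Budget per element. -/
def LFB (k : ℕ) : ℕ := 16 * (Nat.clog 2 k + 1)

/-- Induction invariant: a tree realizing the lazy-finger bound for a block. -/
def Phi (k : ℕ) (l : List ℕ) (T : BTree) : Prop :=
  (∃ C x, T = BTree.node C x BTree.leaf) ∧ T.IsSearchTree ∧ T.keys = l.toFinset ∧
  lfCost T l + 2 * BTree.depth T l.headI + 2 * BTree.depth T l.getLastI + LFB k
    ≤ LFB k * l.length

lemma exists_assign {k : ℕ} : ∀ L : List (List ℕ), (∀ l ∈ L, ∃ T, Phi k l T) →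
    ∃ P : List (List ℕ × BTree), P.map Prod.fst = L ∧ ∀ p ∈ P, Phi k p.1 p.2 := by
  intro L
  induction L with
  | nil => exact fun _ => ⟨[], rfl, by simp⟩
  | cons l L' ih =>
    intro h
    obtain ⟨T, hT⟩ := h l (by simp)
    obtain ⟨P', h1, h2⟩ := ih (fun x hx => h x (List.mem_cons_of_mem l hx))
    refine ⟨(l, T) :: P', by simp [h1], ?_⟩
    intro p hp
    rcases List.mem_cons.mp hp with rfl | hp
    · exact hT
    · exact h2 _ hp

open BTree in
lemma main_lemma (k : ℕ) : ∀ S : List ℕ, KDecomp k S → S.Nodup → ∃ T, Phi k S T := by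
  intro S hKD
  induction hKD with
  | single x =>
    intro _
    refine ⟨node leaf x leaf, ⟨leaf, x, rfl⟩, ?_, ?_, ?_⟩
    · refine ⟨?_, ?_, trivial, trivial⟩ <;> simp [keys]
    · simp [keys]
    · simp [lfCost, List.headI, List.getLastI, LFB]
  | blocks L h2 hk hint hrec ih =>
    intro hND
    have hNDl : ∀ l ∈ L, l.Nodup := fun l hl => (hint l hl).1
    have hdisj : L.Pairwise List.Disjoint := (List.nodup_flatten.mp hND).2
    have hblkne : ∀ l ∈ L, l ≠ [] := by
      intro l hl hemp
      obtain ⟨a, b, hab, hIcc⟩ := (hint l hl).2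
      have : a ∈ l.toFinset := by rw [hIcc]; simp [hab]
      rw [hemp] at this; simp at this
    obtain ⟨P, hPfst, hPphi⟩ := exists_assign L (fun l hl => ih l hl (hNDl l hl))
    have hPlen : P.length = L.length := by rw [← hPfst, List.length_map]
    have hPmemL : ∀ p ∈ P, p.1 ∈ L := by
      intro p hp; rw [← hPfst]; exact List.mem_map_of_mem (f := Prod.fst) hp
    have hPne : P ≠ [] := by
      intro h; rw [h] at hPlen; simp at hPlen; omega
    -- sort the blocks by value
    set r : List ℕ × BTree → List ℕ × BTree → Prop :=
      fun p q => p.1.headI ≤ q.1.headI with hr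
    have : DecidableRel r := fun p q => Nat.decLe _ _
    have htot : IsTotal (List ℕ × BTree) r := ⟨fun p q => Nat.le_total _ _⟩
    have htrans : IsTrans (List ℕ × BTree) r := ⟨fun a b c => Nat.le_trans⟩
    set Q : List (List ℕ × BTree) := List.insertionSort r P with hQ
    have hQP : Q.Perm P := List.perm_insertionSort r P
    have hQs : Q.Pairwise r := List.pairwise_insertionSort r P
    have hQmem : ∀ p, p ∈ Q ↔ p ∈ P := fun p => hQP.mem_iff
    have hQlen : Q.length = P.length := hQP.length_eq
    -- pairwise disjointness on Q
    have hPd : P.Pairwise (fun p q => p.1.Disjoint q.1) := by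
      have := hPfst ▸ hdisj
      exact List.pairwise_map.mp this
    have hQd : Q.Pairwise (fun p q => p.1.Disjoint q.1) :=
      (hQP.pairwise_iff (fun h => List.Disjoint.symm h)).mpr hPd
    -- list of trees, in increasing key order
    set TL : List BTree := Q.map Prod.snd with hTL
    have hTLlen : TL.length = P.length := by rw [hTL, List.length_map, hQlen]
    have hTLne : TL ≠ [] := by
      intro h
      have := congrArg List.length h
      rw [hTLlen] at this; simp at this; exact hPne this
    have hTLmem : ∀ Tt ∈ TL, ∃ p ∈ Q, p.2 = Tt := by
      intro Tt hTt
      obtain ⟨p, hp, hpe⟩ := List.mem_map.mp hTt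
      exact ⟨p, hp, hpe⟩
    have hPhiQ : ∀ p ∈ Q, Phi k p.1 p.2 := fun p hp => hPphi p ((hQmem p).mp hp)
    have hTLgood : ∀ Tt ∈ TL, Tt ≠ leaf ∧ IsSearchTree Tt := by
      intro Tt hTt
      obtain ⟨p, hp, rfl⟩ := hTLmem Tt hTt
      obtain ⟨⟨C, x, hform⟩, hsearch, -, -⟩ := hPhiQ p hp
      refine ⟨?_, hsearch⟩
      rw [hform]; intro h; cases h
    -- keys of block trees are intervals
    have hIccQ : ∀ p ∈ Q, ∃ a b : ℕ, a ≤ b ∧ p.1.toFinset = Finset.Icc a b := by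
      intro p hp
      exact ((hint p.1 (hPmemL p ((hQmem p).mp hp))).2)
    have hkeysQ : ∀ p ∈ Q, keys p.2 = p.1.toFinset := by
      intro p hp
      exact (hPhiQ p hp).2.2.1
    have hQblkne : ∀ p ∈ Q, p.1 ≠ [] := fun p hp =>
      hblkne p.1 (hPmemL p ((hQmem p).mp hp))
    -- pairwise key ordering
    have hKLT : TL.Pairwise KLT := by
      rw [hTL, List.pairwise_map]
      have hand := List.Pairwise.and hQs hQd
      refine hand.imp_of_mem ?_
      intro p q hp hq hpq
      intro x hx y hy
      obtain ⟨a1, b1, hab1, hI1⟩ := hIccQ p hp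
      obtain ⟨a2, b2, hab2, hI2⟩ := hIccQ q hq
      rw [hkeysQ p hp, hI1] at hx
      rw [hkeysQ q hq, hI2] at hy
      have hd : p.1.Disjoint q.1 := hpq.2
      have hdF : ∀ z, z ∈ p.1.toFinset → z ∈ q.1.toFinset → False := by
        intro z hz1 hz2
        exact hd (List.mem_toFinset.mp hz1) (List.mem_toFinset.mp hz2)
      have hnov : ¬(a2 ≤ b1 ∧ a1 ≤ b2) := by
        rintro ⟨h1, h2⟩
        refine hdF (max a1 a2) ?_ ?_
        · rw [hI1]; simp [Finset.mem_Icc]; omega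
        · rw [hI2]; simp [Finset.mem_Icc]; omega
      have hhp : p.1.headI ∈ p.1.toFinset :=
        List.mem_toFinset.mpr (headI_mem (hQblkne p hp))
      have hhq : q.1.headI ∈ q.1.toFinset :=
        List.mem_toFinset.mpr (headI_mem (hQblkne q hq))
      rw [hI1] at hhp; rw [hI2] at hhq
      simp [Finset.mem_Icc] at hx hy hhp hhq
      have hle : p.1.headI ≤ q.1.headI := hpq.1
      omega
    -- build combined tree
    have CS : CSpec TL := combine_spec TL.length TL (le_refl _) hTLne hTLgood hKLT
    set CT : BTree := (combineJK TL).1 with hCT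
    set JK : Finset ℕ := (combineJK TL).2 with hJK
    set gm : ℕ := (sMax CT).2 with hgm
    set C' : BTree := (sMax CT).1 with hC'
    set T : BTree := node C' gm leaf with hT
    have hCTne : CT ≠ leaf := CS.ne
    have hCTsearch : IsSearchTree CT := CS.search
    have hgm_mem : gm ∈ keys CT := sMax_mem hCTne hCTsearch
    have hgm_dom : ∀ y ∈ keys CT, y ≤ gm := sMax_dom CT hCTne hCTsearch
    have hgm_nm : gm ∉ keys C' := sMax_not_mem CT hCTne hCTsearch
    have hC'keys : keys C' ∪ {gm} = keys CT := sMax_keys CT hCTne hCTsearch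
    have hC'search : IsSearchTree C' := sMax_search CT hCTne hCTsearch
    have hC'depth : ∀ y ∈ keys C', depth C' y ≤ depth CT y := sMax_depth CT hCTne hCTsearch
    have hC'dist : ∀ a b, a ∈ keys C' → b ∈ keys C' → dist C' a b ≤ dist CT a b :=
      sMax_dist CT hCTne hCTsearch
    have hC'mem : ∀ x ∈ keys CT, x ≠ gm → x ∈ keys C' := by
      intro x hx hne
      rw [← hC'keys] at hx
      rcases Finset.mem_union.mp hx with h | h
      · exact h
      · simp at h; omega
    have hkeysT : keys T = keys CT := by
      rw [hT]; rw [keys_node]; rw [← hC'keys]; simp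
    have hTsearch : IsSearchTree T := by
      refine ⟨?_, by simp, hC'search, trivial⟩
      intro y hy
      have h1 : y ∈ keys CT := by rw [← hC'keys]; exact Finset.mem_union.mpr (Or.inl hy)
      have h2 := hgm_dom y h1
      have h3 : y ≠ gm := fun h => hgm_nm (h ▸ hy)
      omega
    -- the depth budget
    set E : ℕ := Nat.clog 2 k + 1 with hE
    have hclogk : Nat.clog 2 TL.length + 1 ≤ E := by
      rw [hE]
      have : TL.length ≤ k := by rw [hTLlen, hPlen]; exact hk
      have := Nat.clog_mono_right 2 this
      omega
    -- membership of block trees in TL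
    have hmemTL : ∀ p ∈ Q, p.2 ∈ TL := fun p hp => List.mem_map_of_mem (f := Prod.snd) hp
    -- depth transfer
    have hdepthT : ∀ p ∈ Q, ∀ x ∈ keys p.2, depth T x ≤ depth p.2 x + E := by
      intro p hp x hx
      by_cases hxg : x = gm
      · rw [hxg, hT]; simp
      · have hxCT : x ∈ keys CT := (CS.keys_iff x).mpr ⟨p.2, hmemTL p hp, hx⟩
        have hxlt : x < gm := lt_of_le_of_ne (hgm_dom x hxCT) hxg
        rw [hT, depth_node_left hxlt]
        have h1 : depth C' x ≤ depth CT x := hC'depth x (hC'mem x hxCT hxg)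
        have h2 : depth CT x ≤ depth p.2 x + Nat.clog 2 TL.length :=
          CS.depth_mem p.2 (hmemTL p hp) x hx
        omega
    -- the root key of each block tree is shallow in T
    have hrootQ : ∀ p ∈ Q, ∃ Cp xp, p.2 = node Cp xp leaf := fun p hp => (hPhiQ p hp).1
    have hdepth_root : ∀ p ∈ Q, depth T ((sMax p.2).2) ≤ E := by
      intro p hp
      have hmx : (sMax p.2).2 ∈ keys p.2 :=
        sMax_mem (hTLgood p.2 (hmemTL p hp)).1 (hTLgood p.2 (hmemTL p hp)).2
      rcases CS.max_cases p.2 (hmemTL p hp) with hc | hc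
      · -- in JK
        by_cases hxg : (sMax p.2).2 = gm
        · rw [hxg, hT]; simp
        · have hxCT : (sMax p.2).2 ∈ keys CT := CS.jk_sub hc
          have hxlt : (sMax p.2).2 < gm := lt_of_le_of_ne (hgm_dom _ hxCT) hxg
          rw [hT, depth_node_left hxlt]
          have h1 : depth C' _ ≤ depth CT ((sMax p.2).2) :=
            hC'depth _ (hC'mem _ hxCT hxg)
          have h2 : depth CT ((sMax p.2).2) ≤ Nat.clog 2 TL.length := CS.depth_jk _ hc
          omega
      · -- dominates all of CT, hence equals gm
        have h1 : (sMax p.2).2 ∈ keys CT := (CS.keys_iff _).mpr ⟨p.2, hmemTL p hp, hmx⟩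
        have h2 : (sMax p.2).2 = gm := le_antisymm (hgm_dom _ h1) (hc gm hgm_mem)
        rw [h2, hT]; simp
    -- dist transfer for non-root keys
    have hdistT : ∀ p ∈ Q, ∀ a b, a ∈ keys p.2 → b ∈ keys p.2 →
        a ≠ (sMax p.2).2 → b ≠ (sMax p.2).2 → dist T a b ≤ dist p.2 a b := by
      intro p hp a b ha hb hna hnb
      have hgood := hTLgood p.2 (hmemTL p hp)
      have hdomp : ∀ y ∈ keys p.2, y ≤ (sMax p.2).2 := sMax_dom p.2 hgood.1 hgood.2
      have hnJK : ∀ x, x ∈ keys p.2 → x ≠ (sMax p.2).2 → x ∉ JK := by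
        intro x hx hxr hxJ
        have := CS.jk_dom x hxJ p.2 (hmemTL p hp) hx
        have h1 : (sMax p.2).2 ≤ x := this _ (sMax_mem hgood.1 hgood.2)
        have h2 : x ≤ (sMax p.2).2 := hdomp x hx
        omega
      have hngm : ∀ x, x ∈ keys p.2 → x ≠ (sMax p.2).2 → x ≠ gm := by
        intro x hx hxr hxg
        have hmx : (sMax p.2).2 ∈ keys p.2 := sMax_mem hgood.1 hgood.2
        have h1 : (sMax p.2).2 ∈ keys CT := (CS.keys_iff _).mpr ⟨p.2, hmemTL p hp, hmx⟩
        have h2 := hgm_dom _ h1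
        have h4 := hdomp x hx
        omega
      have haCT : a ∈ keys CT := (CS.keys_iff a).mpr ⟨p.2, hmemTL p hp, ha⟩
      have hbCT : b ∈ keys CT := (CS.keys_iff b).mpr ⟨p.2, hmemTL p hp, hb⟩
      have hag : a ≠ gm := hngm a ha hna
      have hbg : b ≠ gm := hngm b hb hnb
      have halt : a < gm := lt_of_le_of_ne (hgm_dom a haCT) hag
      have hblt : b < gm := lt_of_le_of_ne (hgm_dom b hbCT) hbg
      rw [hT, dist_node_left halt hblt]
      calc dist C' a b ≤ dist CT a b := hC'dist a b (hC'mem a haCT hag) (hC'mem b hbCT hbg)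
        _ ≤ dist p.2 a b := CS.dist_mem p.2 (hmemTL p hp) a b ha hb
            (hnJK a ha hna) (hnJK b hb hnb)
    -- dist bound for any pair within a block
    have hpairT : ∀ p ∈ Q, ∀ a b, a ∈ keys p.2 → b ∈ keys p.2 →
        dist T a b ≤ dist p.2 a b + 2 * E := by
      intro p hp a b ha hb
      have hgood := hTLgood p.2 (hmemTL p hp)
      obtain ⟨Cp, xp, hform⟩ := hrootQ p hp
      have hsm : (sMax p.2).2 = xp := by rw [hform]; rfl
      have hdroot : depth p.2 xp = 0 := by rw [hform]; simp
      by_cases hca : a = (sMax p.2).2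
      · -- a is the root key
        have h1 := dist_le_depth_add T a b
        have h2 : depth T a ≤ E := hca ▸ hdepth_root p hp
        have h3 : depth T b ≤ depth p.2 b + E := hdepthT p hp b hb
        have h4 : depth p.2 b ≤ depth p.2 xp + dist p.2 xp b := depth_le_depth_add_dist _ _ _
        have h5 : dist p.2 xp b = dist p.2 a b := by rw [hca, hsm]
        omega
      · by_cases hcb : b = (sMax p.2).2
        · have h1 := dist_le_depth_add T a b
          have h2 : depth T b ≤ E := hcb ▸ hdepth_root p hp
          have h3 : depth T a ≤ depth p.2 a + E := hdepthT p hp a ha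
          have h4 : depth p.2 a ≤ depth p.2 xp + dist p.2 xp a := depth_le_depth_add_dist _ _ _
          have h5 : dist p.2 xp a = dist p.2 a b := by rw [hcb, hsm, BTree.dist_comm]
          omega
        · have := hdistT p hp a b ha hb hca hcb
          omega
    -- within-block lazy finger cost
    have hlfT : ∀ p ∈ Q, lfCost T p.1 ≤ lfCost p.2 p.1 + 2 * E + 2 * E := by
      intro p hp
      have hndp : p.1.Nodup := hNDl p.1 (hPmemL p ((hQmem p).mp hp))
      have hmemk : ∀ x ∈ p.1, x ∈ keys p.2 := by
        intro x hx
        rw [hkeysQ p hp]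
        exact List.mem_toFinset.mpr hx
      refine lfCost_pairs T p.2 ((sMax p.2).2) (2 * E) p.1 hndp ?_ ?_
      · intro a b ha hb hna hnb
        exact hdistT p hp a b (hmemk a ha) (hmemk b hb) hna hnb
      · intro a b ha hb
        exact hpairT p hp a b (hmemk a ha) (hmemk b hb)
    -- per-block cost, head, last functions (over the time-ordered list P)
    set cf : List ℕ × BTree → ℕ := fun p => lfCost p.2 p.1 + 2 * E + 2 * E with hcf
    set hf : List ℕ × BTree → ℕ := fun p => depth p.2 p.1.headI + E with hhf
    set ef : List ℕ × BTree → ℕ := fun p => depth p.2 p.1.getLastI + E with hef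
    have hPblkne : ∀ p ∈ P, p.1 ≠ [] := fun p hp => hblkne p.1 (hPmemL p hp)
    have hchain := chain_bound T cf hf ef P hPne hPblkne
      (fun p hp => hlfT p ((hQmem p).mpr hp))
      (fun p hp => by
        have hhIm : p.1.headI ∈ keys p.2 := by
          rw [hkeysQ p ((hQmem p).mpr hp)]
          exact List.mem_toFinset.mpr (headI_mem (hPblkne p hp))
        exact hdepthT p ((hQmem p).mpr hp) _ hhIm)
      (fun p hp => by
        have hhIm : p.1.getLastI ∈ keys p.2 := by
          rw [hkeysQ p ((hQmem p).mpr hp)]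
          exact List.mem_toFinset.mpr (getLastI_mem (hPblkne p hp))
        exact hdepthT p ((hQmem p).mpr hp) _ hhIm)
    -- identify S with the flatten of P
    have hSfl : (P.map Prod.fst).flatten = L.flatten := by rw [hPfst]
    rw [hSfl] at hchain
    -- sums
    set Csum : ℕ := (P.map cf).sum with hCsum
    set Hsum : ℕ := (P.map hf).sum with hHsum
    set Esum : ℕ := (P.map ef).sum with hEsum
    have hsplit : (P.map fun p => cf p + hf p + ef p).sum = Csum + Hsum + Esum := by
      rw [hCsum, hHsum, hEsum, ← sum_map_add, ← sum_map_add]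
    rw [hsplit] at hchain
    -- head and last bounds
    have hheadb : depth T L.flatten.headI ≤ Hsum := by
      have : ∃ p ∈ P, L.flatten.headI = p.1.headI ∧ depth T L.flatten.headI ≤ hf p := by
        cases P with
        | nil => exact absurd rfl hPne
        | cons p P' =>
          have h0 : (((p :: P').map Prod.fst).flatten) = p.1 ++ (P'.map Prod.fst).flatten := rfl
          have h1 : L.flatten.headI = p.1.headI := by
            rw [← hSfl, h0, headI_append (hPblkne p (by simp))]
          refine ⟨p, by simp, h1, ?_⟩
          rw [h1]
          have hhIm : p.1.headI ∈ keys p.2 := by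
            rw [hkeysQ p ((hQmem p).mpr (by simp))]
            exact List.mem_toFinset.mpr (headI_mem (hPblkne p (by simp)))
          exact hdepthT p ((hQmem p).mpr (by simp)) _ hhIm
      obtain ⟨p, hp, -, hb⟩ := this
      calc depth T L.flatten.headI ≤ hf p := hb
        _ ≤ Hsum := by
          rw [hHsum]
          exact List.single_le_sum (fun x _ => Nat.zero_le x) _ (List.mem_map_of_mem (f := hf) hp)
    have hlastb : depth T L.flatten.getLastI ≤ Esum := by
      obtain ⟨p, hp, heq⟩ := getLastI_flatten P hPne hPblkne
      rw [← hSfl, heq]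
      have hhIm : p.1.getLastI ∈ keys p.2 := by
        rw [hkeysQ p ((hQmem p).mpr hp)]
        exact List.mem_toFinset.mpr (getLastI_mem (hPblkne p hp))
      calc depth T p.1.getLastI ≤ ef p := hdepthT p ((hQmem p).mpr hp) _ hhIm
        _ ≤ Esum := by
          rw [hEsum]
          exact List.single_le_sum (fun x _ => Nat.zero_le x) _ (List.mem_map_of_mem (f := ef) hp)
    -- per block budget
    set B : ℕ := LFB k with hB
    have hBE : B = 16 * E := by rw [hB, hE, LFB]
    have hptw : ∀ p ∈ P, cf p + 2 * hf p + 2 * ef p + B ≤ B * p.1.length + 8 * E := by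
      intro p hp
      have hphi : lfCost p.2 p.1 + 2 * depth p.2 p.1.headI
          + 2 * depth p.2 p.1.getLastI + B ≤ B * p.1.length := (hPphi p hp).2.2.2
      simp only [hcf, hhf, hef]
      omega
    have hsum2 : (P.map fun p => cf p + 2 * hf p + 2 * ef p + B).sum
        ≤ (P.map fun p => B * p.1.length + 8 * E).sum := sum_le_sum_map _ _ P hptw
    have hlhs2 : (P.map fun p => cf p + 2 * hf p + 2 * ef p + B).sum
        = Csum + 2 * Hsum + 2 * Esum + P.length * B := by
      rw [hCsum, hHsum, hEsum]
      rw [show (fun p => cf p + 2 * hf p + 2 * ef p + B)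
          = (fun (p : List ℕ × BTree) => (cf p + 2 * hf p + 2 * ef p) + B) from rfl]
      rw [sum_map_add (fun p => cf p + 2 * hf p + 2 * ef p) (fun _ => B) P, sum_map_const]
      rw [show (fun p => cf p + 2 * hf p + 2 * ef p)
          = (fun (p : List ℕ × BTree) => (cf p + 2 * hf p) + 2 * ef p) from rfl]
      rw [sum_map_add (fun p => cf p + 2 * hf p) (fun p => 2 * ef p) P,
        sum_map_add cf (fun p => 2 * hf p) P, sum_map_two, sum_map_two]
    have hrhs2 : (P.map fun p => B * p.1.length + 8 * E).sum
        = B * L.flatten.length + 8 * E * P.length := by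
      rw [sum_map_add (fun p => B * p.1.length) (fun _ => 8 * E) P, sum_map_const,
        sum_map_mulB B (fun p => p.1.length) P]
      have : (P.map fun p => p.1.length).sum = L.flatten.length := by
        rw [← hSfl, List.length_flatten, List.map_map]
        rfl
      rw [this]; ring
    rw [hlhs2, hrhs2] at hsum2
    -- assemble
    refine ⟨T, ⟨C', gm, hT⟩, hTsearch, ?_, ?_⟩
    · -- keys T = toFinset
      rw [hkeysT]
      ext x
      rw [CS.keys_iff x, List.mem_toFinset, List.mem_flatten]
      constructor
      · rintro ⟨Tt, hTt, hx⟩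
        obtain ⟨p, hp, rfl⟩ := hTLmem Tt hTt
        refine ⟨p.1, ?_, ?_⟩
        · rw [← hPfst]; exact List.mem_map_of_mem (f := Prod.fst) ((hQmem p).mp hp)
        · rw [hkeysQ p hp] at hx; exact List.mem_toFinset.mp hx
      · rintro ⟨l, hl, hx⟩
        rw [← hPfst] at hl
        obtain ⟨p, hp, rfl⟩ := List.mem_map.mp hl
        refine ⟨p.2, hmemTL p ((hQmem p).mpr hp), ?_⟩
        rw [hkeysQ p ((hQmem p).mpr hp)]
        exact List.mem_toFinset.mpr hx
    · -- the cost bound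
      have hd2 : 2 ≤ P.length := by omega
      have hconst : 8 * E * P.length + B ≤ B * P.length := by
        rw [hBE]
        calc 8 * E * P.length + 16 * E ≤ 8 * E * P.length + 8 * E * P.length := by
              have : 16 * E ≤ 8 * E * P.length := by
                calc 16 * E = 8 * E * 2 := by ring
                  _ ≤ 8 * E * P.length := Nat.mul_le_mul_left _ hd2
              omega
          _ = 16 * E * P.length := by ring
      -- goal : lfCost T L.flatten + 2 * depth headI + 2 * depth getLastI + B ≤ B * length
      have hfinal : lfCost T L.flatten + 2 * depth T L.flatten.headI
          + 2 * depth T L.flatten.getLastI + B ≤ B * L.flatten.length := by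
        have e1 : Csum + 2 * Hsum + 2 * Esum + B ≤ B * L.flatten.length := by
          have h1 : Csum + 2 * Hsum + 2 * Esum + P.length * B
              ≤ B * L.flatten.length + 8 * E * P.length := hsum2
          have h2 : 8 * E * P.length + B ≤ B * P.length := hconst
          have h3 : P.length * B = B * P.length := Nat.mul_comm _ _
          omega
        omega
      exact hfinal


/-- There is an absolute constant `C > 0` such that for every `k ≥ 2` and every
`k`-decomposable permutation `S` of `{1,…,n}`, the lazy finger bound satisfies
`LF(S) ≤ C·n·log₂ k`. -/
theorem lf_of_decomposable : ∃ C : ℝ, 0 < C ∧ ∀ (k n : ℕ) (S : List ℕ),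
    2 ≤ k → 1 ≤ n → S.length = n → S.Nodup → S.toFinset = Finset.Icc 1 n →
    KDecomp k S → (LF n S : ℝ) ≤ C * n * Real.logb 2 k := by
  refine ⟨48, by norm_num, ?_⟩
  intro k n S hk hn hlen hnd hIcc hKD
  obtain ⟨T, -, hsearch, hkeys, hcost⟩ := main_lemma k S hKD hnd
  have hLF : LF n S ≤ lfCost T S := by
    apply Nat.sInf_le
    exact ⟨T, ⟨hsearch, by rw [hkeys, hIcc]⟩, rfl⟩
  have hlf : lfCost T S ≤ LFB k * n := by
    rw [← hlen]; omega
  have hLFn : LF n S ≤ 16 * (Nat.clog 2 k + 1) * n := by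
    calc LF n S ≤ lfCost T S := hLF
      _ ≤ LFB k * n := hlf
      _ = 16 * (Nat.clog 2 k + 1) * n := by rw [LFB]
  -- real arithmetic
  have hlogb1 : 1 ≤ Real.logb 2 (k : ℝ) := by
    rw [show (1 : ℝ) = Real.logb 2 2 from (Real.logb_self_eq_one one_lt_two).symm]
    apply Real.logb_le_logb_of_le one_lt_two (by norm_num)
    exact_mod_cast hk
  have hclogle : (Nat.clog 2 k : ℝ) ≤ Real.logb 2 (k : ℝ) + 1 := by
    rcases Nat.eq_zero_or_pos (Nat.clog 2 k) with h0 | hpos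
    · rw [h0]; push_cast; linarith
    · have hk1 : 1 < k := by omega
      have hpow : 2 ^ ((Nat.clog 2 k) - 1) < k := by
        have := Nat.pow_pred_clog_lt_self (b := 2) one_lt_two (x := k) hk1
        simpa [Nat.pred_eq_sub_one] using this
      have hpowR : (2 : ℝ) ^ ((Nat.clog 2 k) - 1) < (k : ℝ) := by
        exact_mod_cast hpow
      have hlt : Real.logb 2 ((2 : ℝ) ^ ((Nat.clog 2 k) - 1)) < Real.logb 2 (k : ℝ) :=
        Real.logb_lt_logb one_lt_two (by positivity) hpowR
      rw [Real.logb_pow, Real.logb_self_eq_one one_lt_two, mul_one] at hlt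
      have hcast : ((Nat.clog 2 k - 1 : ℕ) : ℝ) = (Nat.clog 2 k : ℝ) - 1 := by
        have : 1 ≤ Nat.clog 2 k := hpos
        push_cast [Nat.cast_sub this]
        ring
      rw [hcast] at hlt
      linarith
  have hLFreal : (LF n S : ℝ) ≤ (16 * (Nat.clog 2 k + 1) : ℕ) * n := by
    have := hLFn
    exact_mod_cast this
  have hcoef : ((16 * (Nat.clog 2 k + 1) : ℕ) : ℝ) ≤ 48 * Real.logb 2 (k : ℝ) := by
    push_cast
    linarith
  calc (LF n S : ℝ) ≤ ((16 * (Nat.clog 2 k + 1) : ℕ) : ℝ) * n := hLFreal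
    _ ≤ (48 * Real.logb 2 (k : ℝ)) * n := by
        apply mul_le_mul_of_nonneg_right hcoef (by positivity)
    _ = 48 * n * Real.logb 2 (k : ℝ) := by ring
end

section
/- There is an absolute constant C > 0 such that for every integer k ≥ 1, every k-monotone access sequence S = (s_1,…,s_m) ∈ {1,…,n}^m, and every BST T on {1,…,n}, the k-lazy finger cost on T satisfies LF^k_T(S) ≤ C·(m + n·k). In particular LF^k(S) ≤ C·(m + n·k). -/
/-- Total cost of serving a list of (access, finger) pairs in the fixed tree `T`:
the chosen finger moves from its current position to the accessed key at cost
`1 + distance`, and its position is updated. -/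
def serveFingers {k : ℕ} (T : BTree) : (Fin k → ℕ) → List (ℕ × Fin k) → ℕ
  | _, [] => 0
  | pos, (x, i) :: rest =>
      (1 + BTree.dist T (pos i) x) + serveFingers T (Function.update pos i x) rest

/-- `LF^k_T(S)`: the minimum, over initial finger placements at keys of `T` and over
assignments of fingers to accesses, of the total `k`-finger cost of serving `S` in `T`. -/
noncomputable def LFkT (k : ℕ) (T : BTree) {m : ℕ} (S : Fin m → ℕ) : ℕ :=
  sInf {c : ℕ | ∃ (init : Fin k → ℕ) (f : Fin m → Fin k),
    (∀ i, init i ∈ T.keys) ∧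
    c = serveFingers T init (List.ofFn fun j => (S j, f j))}

/-- The `k`-lazy finger bound `LF^k(S) = min_T LF^k_T(S)` over BSTs `T` on `{1,…,n}`. -/
noncomputable def LFk (k n : ℕ) {m : ℕ} (S : Fin m → ℕ) : ℕ :=
  sInf {c : ℕ | ∃ T : BTree, T.IsBSTOn n ∧ c = LFkT k T S}

/-- `S` is `k`-monotone: it has no strictly increasing subsequence of length `k+1`,
or no strictly decreasing subsequence of length `k+1`. -/
def KMonotone (k : ℕ) {m : ℕ} (S : Fin m → ℕ) : Prop :=
  (¬ ∃ t : Fin (k + 1) → Fin m, StrictMono t ∧ StrictMono (S ∘ t)) ∨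
  (¬ ∃ t : Fin (k + 1) → Fin m, StrictMono t ∧ StrictAnti (S ∘ t))

namespace BTree

def size : BTree → ℕ
  | leaf => 0
  | node l _ r => size l + size r + 1

lemma depth_le_size : ∀ (T : BTree) (y : ℕ), depth T y ≤ size T
  | leaf, _ => le_refl 0
  | node l x r, y => by
    show (if y = x then 0 else if y < x then depth l y + 1 else depth r y + 1) ≤ _
    have h1 := depth_le_size l y
    have h2 := depth_le_size r y
    split_ifs <;> simp [size] <;> omega

lemma depth_lt : ∀ {y x : ℕ} (l r : BTree), y < x → depth (node l x r) y = depth l y + 1 := by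
  intro y x l r h
  show (if y = x then 0 else if y < x then _ else _) = _
  rw [if_neg (by omega), if_pos h]

lemma depth_gt : ∀ {y x : ℕ} (l r : BTree), x < y → depth (node l x r) y = depth r y + 1 := by
  intro y x l r h
  show (if y = x then 0 else if y < x then _ else _) = _
  rw [if_neg (by omega), if_neg (by omega)]

lemma depth_eq (l r : BTree) (x : ℕ) : depth (node l x r) x = 0 := by
  show (if x = x then 0 else _) = 0
  rw [if_pos rfl]

lemma dist_left {a b x : ℕ} (l r : BTree) (ha : a < x) (hb : b < x) :
    dist (node l x r) a b = dist l a b := by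
  show (if _ then _ else _) = _
  rw [if_pos ⟨ha, hb⟩]

lemma dist_right {a b x : ℕ} (l r : BTree) (ha : x < a) (hb : x < b) :
    dist (node l x r) a b = dist r a b := by
  show (if _ then _ else _) = _
  rw [if_neg (by omega), if_pos ⟨ha, hb⟩]

lemma dist_cross {a b x : ℕ} (l r : BTree) (h1 : ¬(a < x ∧ b < x)) (h2 : ¬(x < a ∧ x < b)) :
    dist (node l x r) a b = depth (node l x r) a + depth (node l x r) b := by
  show (if _ then _ else _) = _
  rw [if_neg h1, if_neg h2]

def pathCost (T : BTree) : List ℕ → ℕ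
  | [] => 0
  | [_] => 0
  | a :: b :: rest => dist T a b + pathCost T (b :: rest)

@[simp] lemma pathCost_nil (T : BTree) : pathCost T [] = 0 := rfl
@[simp] lemma pathCost_single (T : BTree) (a : ℕ) : pathCost T [a] = 0 := rfl
lemma pathCost_cons (T : BTree) (a b : ℕ) (rest : List ℕ) :
    pathCost T (a :: b :: rest) = dist T a b + pathCost T (b :: rest) := rfl

lemma pathCost_leaf : ∀ (L : List ℕ), pathCost leaf L = 0
  | [] => rfl
  | [_] => rfl
  | _ :: b :: rest => by
    rw [pathCost_cons, pathCost_leaf (b :: rest)]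
    rfl

lemma pathCost_append (T : BTree) :
    ∀ (P : List ℕ) (p m : ℕ) (M : List ℕ),
      pathCost T ((P ++ [p]) ++ (m :: M)) =
        pathCost T (P ++ [p]) + dist T p m + pathCost T (m :: M)
  | [], p, m, M => by simp [pathCost_cons]
  | q :: P, p, m, M => by
    obtain ⟨c, L, hL⟩ : ∃ c L, P ++ [p] = c :: L := by
      cases P with
      | nil => exact ⟨p, [], rfl⟩
      | cons a t => exact ⟨a, t ++ [p], rfl⟩
    have := pathCost_append T P p m M
    simp only [List.cons_append, pathCost_cons, hL] at *
    omega

lemma pathCost_congr_right (l r : BTree) (x : ℕ) :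
    ∀ (L : List ℕ), (∀ y ∈ L, x < y) → pathCost (node l x r) L = pathCost r L
  | [], _ => rfl
  | [_], _ => rfl
  | a :: b :: rest, h => by
    rw [pathCost_cons, pathCost_cons,
      dist_right l r (h a (by simp)) (h b (by simp)),
      pathCost_congr_right l r x (b :: rest) (fun y hy => h y (by simp [hy]))]

lemma pathCost_congr_left (l r : BTree) (x : ℕ) :
    ∀ (L : List ℕ), (∀ y ∈ L, y < x) → pathCost (node l x r) L = pathCost l L
  | [], _ => rfl
  | [_], _ => rfl
  | a :: b :: rest, h => by
    rw [pathCost_cons, pathCost_cons,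
      dist_left l r (h a (by simp)) (h b (by simp)),
      pathCost_congr_left l r x (b :: rest) (fun y hy => h y (by simp [hy]))]

lemma pathCost_const (l r : BTree) (x : ℕ) :
    ∀ (L : List ℕ), (∀ y ∈ L, y = x) → pathCost (node l x r) L = 0
  | [], _ => rfl
  | [_], _ => rfl
  | a :: b :: rest, h => by
    have ha : a = x := h a (by simp)
    have hb : b = x := h b (by simp)
    rw [pathCost_cons, pathCost_const l r x (b :: rest) (fun y hy => h y (by simp [hy]))]
    subst ha; subst hb
    rw [dist_cross l r (by omega) (by omega), depth_eq]

end BTree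

namespace BTree

lemma head?_append_left {α : Type*} {X Y : List α} (h : X ≠ []) : (X ++ Y).head? = X.head? := by
  rw [List.head?_append, Option.or_of_isSome]; rwa [List.isSome_head?]

lemma getLast?_append_right {α : Type*} {X Y : List α} (h : Y ≠ []) :
    (X ++ Y).getLast? = Y.getLast? := by
  rw [List.getLast?_append, Option.or_of_isSome]; rwa [List.getLast?_isSome]

lemma chain_split (p : ℕ → Prop) [DecidablePred p] (upward : ∀ ⦃y z : ℕ⦄, z ≤ y → p z → p y) :
    ∀ L : List ℕ, L.Pairwise (· ≥ ·) →
      ∃ P M, L = P ++ M ∧ (∀ y ∈ P, p y) ∧ (∀ y ∈ M, ¬ p y)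
  | [], _ => ⟨[], [], rfl, by simp, by simp⟩
  | a :: L, h => by
    rw [List.pairwise_cons] at h
    obtain ⟨ha, hL⟩ := h
    by_cases hpa : p a
    · obtain ⟨P, M, hLPM, hP, hM⟩ := chain_split p upward L hL
      exact ⟨a :: P, M, by simp [hLPM], by simpa [hpa] using hP, hM⟩
    · refine ⟨[], a :: L, rfl, by simp, ?_⟩
      intro y hy
      rcases List.mem_cons.mp hy with rfl | hy
      · exact hpa
      · exact fun hpy => hpa (upward (ha y hy) hpy)

lemma pathBound_dec : ∀ (T : BTree) (L : List ℕ), L.Pairwise (· ≥ ·) →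
    ∀ a b, L.head? = some a → L.getLast? = some b →
    pathCost T L + depth T a + depth T b ≤ 4 * size T
  | leaf, L, _, a, b, _, _ => by
    rw [pathCost_leaf]
    show 0 + depth leaf a + depth leaf b ≤ _
    simp [depth, size]
  | node l x r, L, hpair, a, b, hhead, hlast => by
    have IHl := pathBound_dec l
    have IHr := pathBound_dec r
    have claimM : ∀ M : List ℕ, M.Pairwise (· ≥ ·) → (∀ y ∈ M, y ≤ x) →
        ∀ a b, M.head? = some a → M.getLast? = some b →
        pathCost (node l x r) M + depth (node l x r) a + depth (node l x r) b
          ≤ 4 * size l + 2 := by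
      clear hhead hlast hpair
      intro M hMpair hMle a b hhead hlast
      obtain ⟨Q, R, hQR, hQ, hR⟩ := chain_split (fun y => x ≤ y)
        (fun y z hzy hz => le_trans hz hzy) M hMpair
      subst hQR
      have hQeq : ∀ y ∈ Q, y = x := fun y hy =>
        le_antisymm (hMle y (List.mem_append_left _ hy)) (hQ y hy)
      have hRlt : ∀ y ∈ R, y < x := fun y hy => lt_of_not_ge (hR y hy)
      have hRpair : R.Pairwise (· ≥ ·) := (List.pairwise_append.mp hMpair).2.1
      rcases List.eq_nil_or_concat Q with rfl | ⟨I, ql, hQc⟩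
      · -- Q empty : all < x
        simp only [List.nil_append] at *
        rcases R with _ | ⟨r1, R'⟩
        · simp at hhead
        · obtain rfl : r1 = a := by simpa using hhead
          have hb : b ∈ r1 :: R' := List.mem_of_mem_getLast? (by rw [hlast]; rfl)
          rw [pathCost_congr_left l r x _ hRlt,
            depth_lt l r (hRlt _ (by simp)), depth_lt l r (hRlt _ hb)]
          have := IHl (r1 :: R') hRpair r1 b rfl hlast
          omega
      · subst hQc
        rw [List.concat_eq_append] at *
        rcases R with _ | ⟨r1, R'⟩
        · -- R empty : all equal x
          simp only [List.append_nil] at *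
          have ha : a ∈ I ++ [ql] := List.mem_of_mem_head? (by rw [hhead]; rfl)
          have hb : b ∈ I ++ [ql] := List.mem_of_mem_getLast? (by rw [hlast]; rfl)
          rw [pathCost_const l r x _ hQeq, hQeq a ha, hQeq b hb, depth_eq]
          omega
        · -- both nonempty
          have hql : ql = x := hQeq ql (by simp)
          have ha : a ∈ I ++ [ql] := by
            have h1 : ((I ++ [ql]) ++ r1 :: R').head? = (I ++ [ql]).head? :=
              head?_append_left (by simp)
            exact List.mem_of_mem_head? (by rw [← h1, hhead]; rfl)
          have hax : a = x := hQeq a ha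
          have hlastR : (r1 :: R').getLast? = some b := by
            rw [← hlast, getLast?_append_right (by simp)]
          have hb : b ∈ r1 :: R' := List.mem_of_mem_getLast? (by rw [hlastR]; rfl)
          have hsplit := pathCost_append (node l x r) I ql r1 R'
          have hQz : pathCost (node l x r) (I ++ [ql]) = 0 :=
            pathCost_const l r x _ hQeq
          have hr1 : r1 < x := hRlt r1 (by simp)
          have hcross : dist (node l x r) ql r1 = depth l r1 + 1 := by
            rw [dist_cross l r (by omega) (by omega), hql, depth_eq,
              depth_lt l r hr1]
            omega
          have hRcost : pathCost (node l x r) (r1 :: R') = pathCost l (r1 :: R') :=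
            pathCost_congr_left l r x _ hRlt
          have hdb : depth (node l x r) b = depth l b + 1 := depth_lt l r (hRlt b hb)
          have := IHl (r1 :: R') hRpair r1 b rfl hlastR
          have hda : depth (node l x r) a = 0 := by rw [hax, depth_eq]
          omega
    -- main split
    obtain ⟨P, M, hPM, hP, hM⟩ := chain_split (fun y => x < y)
      (fun y z hzy hz => lt_of_lt_of_le hz hzy) L hpair
    subst hPM
    have hMle : ∀ y ∈ M, y ≤ x := fun y hy => le_of_not_gt (hM y hy)
    have hPpair : P.Pairwise (· ≥ ·) := (List.pairwise_append.mp hpair).1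
    have hMpair : M.Pairwise (· ≥ ·) := (List.pairwise_append.mp hpair).2.1
    rcases List.eq_nil_or_concat P with rfl | ⟨I, pl, hPc⟩
    · -- all ≤ x
      simp only [List.nil_append] at *
      have := claimM M hMpair hMle a b hhead hlast
      simp only [size]; omega
    · subst hPc
      rw [List.concat_eq_append] at *
      rcases M with _ | ⟨m1, M'⟩
      · -- all > x
        simp only [List.append_nil] at *
        have ha : a ∈ I ++ [pl] := List.mem_of_mem_head? (by rw [hhead]; rfl)
        have hb : b ∈ I ++ [pl] := List.mem_of_mem_getLast? (by rw [hlast]; rfl)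
        rw [pathCost_congr_right l r x _ hP,
          depth_gt l r (hP a ha), depth_gt l r (hP b hb)]
        have := IHr (I ++ [pl]) hPpair a b hhead hlast
        simp only [size]; omega
      · -- both nonempty
        have hheadP : (I ++ [pl]).head? = some a := by
          rw [← head?_append_left (Y := m1 :: M') (by simp), hhead]
        have ha : a ∈ I ++ [pl] := List.mem_of_mem_head? (by rw [hheadP]; rfl)
        have hlastM : (m1 :: M').getLast? = some b := by
          rw [← hlast, getLast?_append_right (by simp)]
        have hsplit := pathCost_append (node l x r) I pl m1 M'
        have hPcost : pathCost (node l x r) (I ++ [pl]) = pathCost r (I ++ [pl]) :=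
          pathCost_congr_right l r x _ hP
        have hplx : x < pl := hP pl (by simp)
        have hm1x : m1 ≤ x := hMle m1 (by simp)
        have hcross : dist (node l x r) pl m1 =
            (depth r pl + 1) + depth (node l x r) m1 := by
          rw [dist_cross l r (by omega) (by omega), depth_gt l r hplx]
        have hMbound := claimM (m1 :: M') hMpair hMle m1 b rfl hlastM
        have hlastP : (I ++ [pl]).getLast? = some pl := by
          rw [getLast?_append_right (by simp)]; rfl
        have hPbound := IHr (I ++ [pl]) hPpair a pl hheadP hlastP
        have hda : depth (node l x r) a = depth r a + 1 := depth_gt l r (hP a ha)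
        simp only [size]
        omega

end BTree

namespace BTree

lemma chain_split_inc (p : ℕ → Prop) [DecidablePred p] (down : ∀ ⦃y z : ℕ⦄, y ≤ z → p z → p y) :
    ∀ L : List ℕ, L.Pairwise (· ≤ ·) →
      ∃ P M, L = P ++ M ∧ (∀ y ∈ P, p y) ∧ (∀ y ∈ M, ¬ p y)
  | [], _ => ⟨[], [], rfl, by simp, by simp⟩
  | a :: L, h => by
    rw [List.pairwise_cons] at h
    obtain ⟨ha, hL⟩ := h
    by_cases hpa : p a
    · obtain ⟨P, M, hLPM, hP, hM⟩ := chain_split_inc p down L hL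
      exact ⟨a :: P, M, by simp [hLPM], by simpa [hpa] using hP, hM⟩
    · refine ⟨[], a :: L, rfl, by simp, ?_⟩
      intro y hy
      rcases List.mem_cons.mp hy with rfl | hy
      · exact hpa
      · exact fun hpy => hpa (down (ha y hy) hpy)

lemma pathBound_inc : ∀ (T : BTree) (L : List ℕ), L.Pairwise (· ≤ ·) →
    ∀ a b, L.head? = some a → L.getLast? = some b →
    pathCost T L + depth T a + depth T b ≤ 4 * size T
  | leaf, L, _, a, b, _, _ => by
    rw [pathCost_leaf]
    show 0 + depth leaf a + depth leaf b ≤ _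
    simp [depth, size]
  | node l x r, L, hpair, a, b, hhead, hlast => by
    have IHl := pathBound_inc l
    have IHr := pathBound_inc r
    have claimM : ∀ M : List ℕ, M.Pairwise (· ≤ ·) → (∀ y ∈ M, x ≤ y) →
        ∀ a b, M.head? = some a → M.getLast? = some b →
        pathCost (node l x r) M + depth (node l x r) a + depth (node l x r) b
          ≤ 4 * size r + 2 := by
      clear hhead hlast hpair
      intro M hMpair hMle a b hhead hlast
      obtain ⟨Q, R, hQR, hQ, hR⟩ := chain_split_inc (fun y => y ≤ x)
        (fun y z hyz hz => le_trans hyz hz) M hMpair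
      subst hQR
      have hQeq : ∀ y ∈ Q, y = x := fun y hy =>
        le_antisymm (hQ y hy) (hMle y (List.mem_append_left _ hy))
      have hRgt : ∀ y ∈ R, x < y := fun y hy => lt_of_not_ge (hR y hy)
      have hRpair : R.Pairwise (· ≤ ·) := (List.pairwise_append.mp hMpair).2.1
      rcases List.eq_nil_or_concat Q with rfl | ⟨I, ql, hQc⟩
      · -- Q empty : all > x
        simp only [List.nil_append] at *
        rcases R with _ | ⟨r1, R'⟩
        · simp at hhead
        · obtain rfl : r1 = a := by simpa using hhead
          have hb : b ∈ r1 :: R' := List.mem_of_mem_getLast? (by rw [hlast]; rfl)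
          rw [pathCost_congr_right l r x _ hRgt,
            depth_gt l r (hRgt _ (by simp)), depth_gt l r (hRgt _ hb)]
          have := IHr (r1 :: R') hRpair r1 b rfl hlast
          omega
      · subst hQc
        rw [List.concat_eq_append] at *
        rcases R with _ | ⟨r1, R'⟩
        · -- R empty : all equal x
          simp only [List.append_nil] at *
          have ha : a ∈ I ++ [ql] := List.mem_of_mem_head? (by rw [hhead]; rfl)
          have hb : b ∈ I ++ [ql] := List.mem_of_mem_getLast? (by rw [hlast]; rfl)
          rw [pathCost_const l r x _ hQeq, hQeq a ha, hQeq b hb, depth_eq]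
          omega
        · -- both nonempty
          have hql : ql = x := hQeq ql (by simp)
          have ha : a ∈ I ++ [ql] := by
            have h1 : ((I ++ [ql]) ++ r1 :: R').head? = (I ++ [ql]).head? :=
              head?_append_left (by simp)
            exact List.mem_of_mem_head? (by rw [← h1, hhead]; rfl)
          have hax : a = x := hQeq a ha
          have hlastR : (r1 :: R').getLast? = some b := by
            rw [← hlast, getLast?_append_right (by simp)]
          have hb : b ∈ r1 :: R' := List.mem_of_mem_getLast? (by rw [hlastR]; rfl)
          have hsplit := pathCost_append (node l x r) I ql r1 R'
          have hQz : pathCost (node l x r) (I ++ [ql]) = 0 :=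
            pathCost_const l r x _ hQeq
          have hr1 : x < r1 := hRgt r1 (by simp)
          have hcross : dist (node l x r) ql r1 = depth r r1 + 1 := by
            rw [dist_cross l r (by omega) (by omega), hql, depth_eq,
              depth_gt l r hr1]
            omega
          have hRcost : pathCost (node l x r) (r1 :: R') = pathCost r (r1 :: R') :=
            pathCost_congr_right l r x _ hRgt
          have hdb : depth (node l x r) b = depth r b + 1 := depth_gt l r (hRgt b hb)
          have := IHr (r1 :: R') hRpair r1 b rfl hlastR
          have hda : depth (node l x r) a = 0 := by rw [hax, depth_eq]
          omega
    -- main split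
    obtain ⟨P, M, hPM, hP, hM⟩ := chain_split_inc (fun y => y < x)
      (fun y z hyz hz => lt_of_le_of_lt hyz hz) L hpair
    subst hPM
    have hMge : ∀ y ∈ M, x ≤ y := fun y hy => le_of_not_gt (hM y hy)
    have hPpair : P.Pairwise (· ≤ ·) := (List.pairwise_append.mp hpair).1
    have hMpair : M.Pairwise (· ≤ ·) := (List.pairwise_append.mp hpair).2.1
    rcases List.eq_nil_or_concat P with rfl | ⟨I, pl, hPc⟩
    · -- all ≥ x
      simp only [List.nil_append] at *
      have := claimM M hMpair hMge a b hhead hlast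
      simp only [size]; omega
    · subst hPc
      rw [List.concat_eq_append] at *
      rcases M with _ | ⟨m1, M'⟩
      · -- all < x
        simp only [List.append_nil] at *
        have ha : a ∈ I ++ [pl] := List.mem_of_mem_head? (by rw [hhead]; rfl)
        have hb : b ∈ I ++ [pl] := List.mem_of_mem_getLast? (by rw [hlast]; rfl)
        rw [pathCost_congr_left l r x _ hP,
          depth_lt l r (hP a ha), depth_lt l r (hP b hb)]
        have := IHl (I ++ [pl]) hPpair a b hhead hlast
        simp only [size]; omega
      · -- both nonempty
        have hheadP : (I ++ [pl]).head? = some a := by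
          rw [← head?_append_left (Y := m1 :: M') (by simp), hhead]
        have ha : a ∈ I ++ [pl] := List.mem_of_mem_head? (by rw [hheadP]; rfl)
        have hlastM : (m1 :: M').getLast? = some b := by
          rw [← hlast, getLast?_append_right (by simp)]
        have hsplit := pathCost_append (node l x r) I pl m1 M'
        have hPcost : pathCost (node l x r) (I ++ [pl]) = pathCost l (I ++ [pl]) :=
          pathCost_congr_left l r x _ hP
        have hplx : pl < x := hP pl (by simp)
        have hm1x : x ≤ m1 := hMge m1 (by simp)
        have hcross : dist (node l x r) pl m1 =
            (depth l pl + 1) + depth (node l x r) m1 := by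
          rw [dist_cross l r (by omega) (by omega), depth_lt l r hplx]
        have hMbound := claimM (m1 :: M') hMpair hMge m1 b rfl hlastM
        have hlastP : (I ++ [pl]).getLast? = some pl := by
          rw [getLast?_append_right (by simp)]; rfl
        have hPbound := IHl (I ++ [pl]) hPpair a pl hheadP hlastP
        have hda : depth (node l x r) a = depth l a + 1 := depth_lt l r (hP a ha)
        simp only [size]
        omega

end BTree

namespace BTree
lemma card_keys : ∀ (T : BTree), IsSearchTree T → T.keys.card = size T
  | leaf, _ => rfl
  | node l x r, h => by
    obtain ⟨hl, hr, hsl, hsr⟩ := h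
    have h1 : Disjoint (keys l) {x} := by
      simp only [Finset.disjoint_singleton_right]
      intro hx; exact absurd (hl x hx) (lt_irrefl x)
    have h2 : Disjoint (keys l ∪ {x}) (keys r) := by
      rw [Finset.disjoint_union_left]
      constructor
      · rw [Finset.disjoint_left]
        intro y hy hyr
        exact absurd (hr y hyr) (by have := hl y hy; omega)
      · simp only [Finset.disjoint_singleton_left]
        intro hx; exact absurd (hr x hx) (lt_irrefl x)
    show (keys l ∪ {x} ∪ keys r).card = size l + size r + 1
    rw [Finset.card_union_of_disjoint h2, Finset.card_union_of_disjoint h1,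
      card_keys l hsl, card_keys r hsr]
    simp; omega

def spine : ℕ → ℕ → BTree
  | 0, _ => leaf
  | c + 1, s => node leaf s (spine c (s + 1))

lemma spine_keys : ∀ (c s : ℕ), (spine c s).keys = Finset.Ico s (s + c)
  | 0, s => by simp [spine, keys]
  | c + 1, s => by
    show (keys leaf ∪ {s} ∪ (spine c (s+1)).keys) = _
    rw [spine_keys c (s+1)]
    ext y
    simp [keys]
    omega

lemma spine_search : ∀ (c s : ℕ), IsSearchTree (spine c s)
  | 0, _ => trivial
  | c + 1, s => by
    refine ⟨by simp [keys], ?_, trivial, spine_search c (s+1)⟩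
    intro y hy
    rw [spine_keys] at hy
    simp at hy
    omega

lemma spine_isBSTOn (n : ℕ) : IsBSTOn (spine n 1) n := by
  refine ⟨spine_search n 1, ?_⟩
  rw [spine_keys]
  ext y; simp; omega

end BTree

open BTree in
lemma serveFingers_eq {k : ℕ} (T : BTree) :
    ∀ (L : List (ℕ × Fin k)) (pos : Fin k → ℕ),
      serveFingers T pos L =
        L.length + ∑ i : Fin k,
          pathCost T (pos i :: (L.filter (fun p => p.2 = i)).map Prod.fst)
  | [], pos => by simp [serveFingers]
  | (x, i₀) :: L, pos => by
    rw [serveFingers, serveFingers_eq T L (Function.update pos i₀ x)]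
    have hterm : ∀ i : Fin k,
        pathCost T (pos i :: (((x, i₀) :: L).filter (fun p => p.2 = i)).map Prod.fst)
          = pathCost T ((Function.update pos i₀ x) i :: (L.filter (fun p => p.2 = i)).map Prod.fst)
            + (if i = i₀ then dist T (pos i₀) x else 0) := by
      intro i
      by_cases h : i = i₀
      · subst h
        rw [if_pos rfl]
        have : ((x, i) :: L).filter (fun p => p.2 = i) = (x, i) :: L.filter (fun p => p.2 = i) := by
          rw [List.filter_cons, if_pos (by simp)]
        rw [this, List.map_cons, Function.update_self]
        show dist T (pos i) x + _ = _
        dsimp only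
        omega
      · rw [if_neg h]
        have : ((x, i₀) :: L).filter (fun p => p.2 = i) = L.filter (fun p => p.2 = i) := by
          rw [List.filter_cons, if_neg (by simp [Fin.val_eq_val]; exact fun hc => h hc.symm)]
        rw [this, Function.update_of_ne h, add_zero]
    simp only [hterm]
    rw [Finset.sum_add_distrib]
    simp [Finset.sum_ite_eq' Finset.univ i₀]
    omega

lemma le_foldr_max : ∀ {l : List ℕ} {a : ℕ}, a ∈ l → a ≤ l.foldr max 0
  | b :: l, a, h => by
    rcases List.mem_cons.mp h with rfl | h
    · exact le_max_left _ _
    · exact le_trans (le_foldr_max h) (le_max_right _ _)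

lemma foldr_max_mem : ∀ {l : List ℕ}, 0 < l.foldr max 0 → l.foldr max 0 ∈ l
  | [], h => by simp at h
  | b :: l, h => by
    show max b (l.foldr max 0) ∈ _
    rcases max_cases b (l.foldr max 0) with ⟨he, _⟩ | ⟨he, hlt⟩
    · rw [he]; exact List.mem_cons_self
    · rw [he]
      exact List.mem_cons_of_mem _ (foldr_max_mem (by rw [← he]; exact h))

def lisAux (S : ℕ → ℕ) (j : ℕ) : ℕ :=
  1 + (((List.range j).attach.map (fun jh =>
      if S jh.1 < S j then lisAux S jh.1 else 0)).foldr max 0)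
decreasing_by exact List.mem_range.mp jh.2

lemma lisAux_pos (S : ℕ → ℕ) (j : ℕ) : 1 ≤ lisAux S j := by
  rw [lisAux]; omega

lemma lisAux_lt (S : ℕ → ℕ) {j' j : ℕ} (hj : j' < j) (hS : S j' < S j) :
    lisAux S j' < lisAux S j := by
  conv_rhs => rw [lisAux]
  have hmem : lisAux S j' ∈ (List.range j).attach.map (fun jh =>
      if S jh.1 < S j then lisAux S jh.1 else 0) := by
    refine List.mem_map.mpr ⟨⟨j', List.mem_range.mpr hj⟩, List.mem_attach _ _, ?_⟩
    simp [hS]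
  have := le_foldr_max hmem
  omega

lemma lisAux_chain (S : ℕ → ℕ) : ∀ j : ℕ, ∃ c : List ℕ,
    c.length = lisAux S j ∧ c.getLast? = some j ∧
    c.Pairwise (· < ·) ∧ c.Pairwise (fun a b => S a < S b) ∧
    ∀ y ∈ c, y ≤ j ∧ S y ≤ S j := by
  intro j
  induction j using Nat.strong_induction_on with
  | _ j IH =>
    set Lst := (List.range j).attach.map (fun jh =>
        if S jh.1 < S j then lisAux S jh.1 else 0) with hLst
    rcases Nat.eq_zero_or_pos (Lst.foldr max 0) with hM | hM
    · refine ⟨[j], ?_, rfl, by simp, by simp, by simp⟩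
      rw [lisAux, ← hLst, hM]
      simp
    · have hmem := foldr_max_mem hM
      rw [hLst] at hmem
      obtain ⟨⟨j₀, hj₀r⟩, _, hval⟩ := List.mem_map.mp hmem
      have hj₀ : j₀ < j := List.mem_range.mp hj₀r
      by_cases hcond : S j₀ < S j
      · rw [if_pos hcond] at hval
        obtain ⟨c₀, hlen, hlast, hpw1, hpw2, hmem₀⟩ := IH j₀ hj₀
        refine ⟨c₀ ++ [j], ?_, ?_, ?_, ?_, ?_⟩
        · rw [List.length_append, hlen, hval]
          simp only [List.length_singleton]
          rw [lisAux, ← hLst]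
          omega
        · rw [BTree.getLast?_append_right (by simp)]; rfl
        · rw [List.pairwise_append]
          exact ⟨hpw1, by simp, fun y hy b hb => by
            rw [List.mem_singleton] at hb; subst hb
            exact lt_of_le_of_lt (hmem₀ y hy).1 hj₀⟩
        · rw [List.pairwise_append]
          exact ⟨hpw2, by simp, fun y hy b hb => by
            rw [List.mem_singleton] at hb; subst hb
            exact lt_of_le_of_lt (hmem₀ y hy).2 hcond⟩
        · intro y hy
          rcases List.mem_append.mp hy with hy | hy
          · exact ⟨le_of_lt (lt_of_le_of_lt (hmem₀ y hy).1 hj₀),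
              le_of_lt (lt_of_le_of_lt (hmem₀ y hy).2 hcond)⟩
          · rw [List.mem_singleton] at hy; subst hy; exact ⟨le_refl _, le_refl _⟩
      · rw [if_neg hcond] at hval
        rw [← hLst] at hval
        omega

lemma lisAux_le (S' : ℕ → ℕ) (m k : ℕ)
    (h : ¬ ∃ t : Fin (k + 1) → ℕ, (∀ i, t i < m) ∧ StrictMono t ∧ StrictMono (S' ∘ t)) :
    ∀ j, j < m → lisAux S' j ≤ k := by
  intro j hj
  by_contra hgt
  push_neg at hgt
  obtain ⟨c, hlen, _, hpw1, hpw2, hmem⟩ := lisAux_chain S' j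
  set c' := c.take (k + 1) with hc'
  have hlen' : c'.length = k + 1 := by
    rw [hc', List.length_take, hlen]
    omega
  have hsub := List.take_sublist (k + 1) c
  have pw1' : c'.Pairwise (· < ·) := List.Pairwise.sublist hsub hpw1
  have pw2' : c'.Pairwise (fun a b => S' a < S' b) := List.Pairwise.sublist hsub hpw2
  have hmem' : ∀ y ∈ c', y < m := fun y hy =>
    lt_of_le_of_lt (hmem y (hsub.subset hy)).1 hj
  refine h ⟨fun i => c'.get ⟨i.1, by rw [hlen']; exact i.2⟩, ?_, ?_, ?_⟩
  · intro i; exact hmem' _ (List.get_mem _ _)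
  · intro i i' hii'
    exact List.pairwise_iff_get.mp pw1' _ _ (by simpa using hii')
  · intro i i' hii'
    exact List.pairwise_iff_get.mp pw2' _ _ (by simpa using hii')

open BTree in
lemma LFkT_le_of_assignment {k n m : ℕ} (S : Fin m → ℕ) (hn : 1 ≤ n)
    (hS : ∀ j, S j ∈ Finset.Icc 1 n) (T : BTree) (hT : T.IsBSTOn n)
    (g : Fin m → Fin k) (p₀ : ℕ) (hp₀ : p₀ ∈ Finset.Icc 1 n)
    (R : ℕ → ℕ → Prop)
    (hR : ∀ (i : Fin k), (p₀ :: ((List.ofFn fun j => (S j, g j)).filter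
        (fun p => p.2 = i)).map Prod.fst).Pairwise R)
    (hpath : ∀ (L : List ℕ), L.Pairwise R → ∀ a b, L.head? = some a →
        L.getLast? = some b → pathCost T L + depth T a + depth T b ≤ 4 * size T) :
    LFkT k T S ≤ m + 4 * (n * k) := by
  obtain ⟨hsearch, hkeys⟩ := hT
  have hsize : size T = n := by
    rw [← card_keys T hsearch, hkeys, Nat.card_Icc]
    omega
  have hmem : (serveFingers T (fun _ => p₀) (List.ofFn fun j => (S j, g j))) ∈
      {c : ℕ | ∃ (init : Fin k → ℕ) (f : Fin m → Fin k),
        (∀ i, init i ∈ T.keys) ∧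
        c = serveFingers T init (List.ofFn fun j => (S j, f j))} :=
    ⟨fun _ => p₀, g, fun _ => by rw [hkeys]; exact hp₀, rfl⟩
  refine le_trans (Nat.sInf_le hmem) ?_
  rw [serveFingers_eq, List.length_ofFn]
  have hterm : ∀ i : Fin k,
      pathCost T ((fun _ => p₀) i :: ((List.ofFn fun j => (S j, g j)).filter
        (fun p => p.2 = i)).map Prod.fst) ≤ 4 * n := by
    intro i
    set L := p₀ :: ((List.ofFn fun j => (S j, g j)).filter
        (fun p => p.2 = i)).map Prod.fst with hL
    have hne : L ≠ [] := by rw [hL]; simp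
    have := hpath L (hR i) p₀ (L.getLast hne) (by rw [hL]; rfl)
      (List.getLast?_eq_getLast hne)
    omega
  calc m + ∑ i : Fin k, pathCost T ((fun _ => p₀) i :: ((List.ofFn fun j => (S j, g j)).filter
        (fun p => p.2 = i)).map Prod.fst)
      ≤ m + ∑ _i : Fin k, 4 * n := by
        gcongr with i
        exact hterm i
    _ = m + 4 * (n * k) := by
        rw [Finset.sum_const, Finset.card_univ, Fintype.card_fin]
        simp [Nat.mul_comm, Nat.mul_assoc, Nat.mul_left_comm]

open BTree in
lemma LFkT_zero {k m : ℕ} (S : Fin m → ℕ) (hk : 1 ≤ k) (T : BTree)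
    (hkeys : T.keys = Finset.Icc 1 0) : LFkT k T S = 0 := by
  have : {c : ℕ | ∃ (init : Fin k → ℕ) (f : Fin m → Fin k),
      (∀ i, init i ∈ T.keys) ∧
      c = serveFingers T init (List.ofFn fun j => (S j, f j))} = ∅ := by
    ext c
    simp only [Set.mem_setOf_eq, Set.mem_empty_iff_false, iff_false]
    rintro ⟨init, f, hinit, _⟩
    have := hinit ⟨0, hk⟩
    rw [hkeys] at this
    simp at this
  rw [LFkT, this, Nat.sInf_empty]

open BTree in
lemma case_dec {k n m : ℕ} (S : Fin m → ℕ) (hk : 1 ≤ k) (hn : 1 ≤ n)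
    (hS : ∀ j, S j ∈ Finset.Icc 1 n)
    (hmono : ¬ ∃ t : Fin (k + 1) → Fin m, StrictMono t ∧ StrictMono (S ∘ t))
    (T : BTree) (hT : T.IsBSTOn n) : LFkT k T S ≤ m + 4 * (n * k) := by
  set S' : ℕ → ℕ := fun j => if h : j < m then S ⟨j, h⟩ else 0 with hS'
  have hS'eq : ∀ j : Fin m, S' j.1 = S j := fun j => by
    rw [hS']; simp [j.2]
  have hb : ∀ j, j < m → lisAux S' j ≤ k := by
    refine lisAux_le S' m k ?_
    rintro ⟨t, hbd, hmt, hms⟩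
    refine hmono ⟨fun i => ⟨t i, hbd i⟩, ?_, ?_⟩
    · intro i i' hii'
      exact Fin.mk_lt_mk.mpr (hmt hii')
    · intro i i' hii'
      have := hms hii'
      simpa only [Function.comp_apply, hS'eq] using
        (by rw [← hS'eq ⟨t i, hbd i⟩, ← hS'eq ⟨t i', hbd i'⟩]; exact this :
          S ⟨t i, hbd i⟩ < S ⟨t i', hbd i'⟩)
  set g : Fin m → Fin k := fun j =>
    ⟨lisAux S' j.1 - 1, by have h1 := lisAux_pos S' j.1; have h2 := hb j.1 j.2; omega⟩ with hg
  have hbase : (List.ofFn fun j => (S j, g j)).Pairwise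
      (fun p q => p.2 = q.2 → q.1 ≤ p.1) := by
    rw [List.pairwise_ofFn]
    intro j j' hjj' heq
    by_contra hlt
    push_neg at hlt
    have hlis : lisAux S' j.1 < lisAux S' j'.1 :=
      lisAux_lt S' (by exact_mod_cast hjj') (by rw [hS'eq, hS'eq]; exact hlt)
    have h1 := lisAux_pos S' j.1
    have : lisAux S' j.1 - 1 = lisAux S' j'.1 - 1 := congrArg Fin.val heq
    omega
  refine LFkT_le_of_assignment S hn hS T hT g n (by simp [hn]) (· ≥ ·) ?_
    (pathBound_dec T)
  intro i
  rw [List.pairwise_cons]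
  constructor
  · intro y hy
    obtain ⟨p, hp, rfl⟩ := List.mem_map.mp hy
    have hpl : p ∈ List.ofFn fun j => (S j, g j) := List.mem_of_mem_filter hp
    obtain ⟨j, rfl⟩ := List.mem_ofFn.mp hpl
    exact (Finset.mem_Icc.mp (hS j)).2
  · rw [List.pairwise_map]
    refine List.Pairwise.imp_of_mem ?_ (List.Pairwise.filter _ hbase)
    intro p q hp hq hpq
    have h1 : p.2 = i := by simpa using List.of_mem_filter hp
    have h2 : q.2 = i := by simpa using List.of_mem_filter hq
    exact hpq (h1.trans h2.symm)

open BTree in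
lemma case_inc {k n m : ℕ} (S : Fin m → ℕ) (hk : 1 ≤ k) (hn : 1 ≤ n)
    (hS : ∀ j, S j ∈ Finset.Icc 1 n)
    (hmono : ¬ ∃ t : Fin (k + 1) → Fin m, StrictMono t ∧ StrictAnti (S ∘ t))
    (T : BTree) (hT : T.IsBSTOn n) : LFkT k T S ≤ m + 4 * (n * k) := by
  set S' : ℕ → ℕ := fun j => if h : j < m then S ⟨j, h⟩ else 0 with hS'
  have hS'eq : ∀ j : Fin m, S' j.1 = S j := fun j => by
    rw [hS']; simp [j.2]
  have hS'le : ∀ j : Fin m, S' j.1 ≤ n := fun j => by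
    rw [hS'eq]; exact (Finset.mem_Icc.mp (hS j)).2
  set Rv : ℕ → ℕ := fun j => n - S' j with hRv
  have hb : ∀ j, j < m → lisAux Rv j ≤ k := by
    refine lisAux_le Rv m k ?_
    rintro ⟨t, hbd, hmt, hms⟩
    refine hmono ⟨fun i => ⟨t i, hbd i⟩, ?_, ?_⟩
    · intro i i' hii'
      exact Fin.mk_lt_mk.mpr (hmt hii')
    · intro i i' hii'
      have h1 := hms hii'
      simp only [Function.comp_apply, hRv] at h1
      have h2 : S' (t i) ≤ n := hS'le ⟨t i, hbd i⟩
      have h3 : S' (t i') ≤ n := hS'le ⟨t i', hbd i'⟩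
      have e1 : S' (t i) = S ⟨t i, hbd i⟩ := by simpa using hS'eq ⟨t i, hbd i⟩
      have e2 : S' (t i') = S ⟨t i', hbd i'⟩ := by simpa using hS'eq ⟨t i', hbd i'⟩
      simp only [Function.comp_apply]
      omega
  set g : Fin m → Fin k := fun j =>
    ⟨lisAux Rv j.1 - 1, by have h1 := lisAux_pos Rv j.1; have h2 := hb j.1 j.2; omega⟩ with hg
  have hbase : (List.ofFn fun j => (S j, g j)).Pairwise
      (fun p q => p.2 = q.2 → p.1 ≤ q.1) := by
    rw [List.pairwise_ofFn]
    intro j j' hjj' heq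
    by_contra hlt
    push_neg at hlt
    have hRlt : Rv j.1 < Rv j'.1 := by
      have h2 := hS'le j
      have h3 := hS'le j'
      have h4 : S' j'.1 < S' j.1 := by rw [hS'eq, hS'eq]; exact hlt
      simp only [hRv]
      omega
    have hlis : lisAux Rv j.1 < lisAux Rv j'.1 :=
      lisAux_lt Rv (by exact_mod_cast hjj') hRlt
    have h1 := lisAux_pos Rv j.1
    have : lisAux Rv j.1 - 1 = lisAux Rv j'.1 - 1 := congrArg Fin.val heq
    omega
  refine LFkT_le_of_assignment S hn hS T hT g 1 (by simp [hn]) (· ≤ ·) ?_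
    (pathBound_inc T)
  intro i
  rw [List.pairwise_cons]
  constructor
  · intro y hy
    obtain ⟨p, hp, rfl⟩ := List.mem_map.mp hy
    have hpl : p ∈ List.ofFn fun j => (S j, g j) := List.mem_of_mem_filter hp
    obtain ⟨j, rfl⟩ := List.mem_ofFn.mp hpl
    exact (Finset.mem_Icc.mp (hS j)).1
  · rw [List.pairwise_map]
    refine List.Pairwise.imp_of_mem ?_ (List.Pairwise.filter _ hbase)
    intro p q hp hq hpq
    have h1 : p.2 = i := by simpa using List.of_mem_filter hp
    have h2 : q.2 = i := by simpa using List.of_mem_filter hq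
    exact hpq (h1.trans h2.symm)


/-- There is an absolute constant `C > 0` such that for every `k ≥ 1`, every `k`-monotone
access sequence `S ∈ {1,…,n}^m` and every BST `T` on `{1,…,n}`, the `k`-lazy finger cost
satisfies `LF^k_T(S) ≤ C·(m + n·k)`; in particular `LF^k(S) ≤ C·(m + n·k)`. -/
theorem lfk_of_monotone : ∃ C : ℝ, 0 < C ∧ ∀ (k n m : ℕ) (S : Fin m → ℕ),
    1 ≤ k → (∀ j, S j ∈ Finset.Icc 1 n) → KMonotone k S →
    (∀ T : BTree, T.IsBSTOn n → (LFkT k T S : ℝ) ≤ C * (m + n * k)) ∧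
    (LFk k n S : ℝ) ≤ C * (m + n * k) := by
  refine ⟨4, by norm_num, ?_⟩
  intro k n m S hk hS hmono
  have main : ∀ T : BTree, T.IsBSTOn n → LFkT k T S ≤ m + 4 * (n * k) := by
    intro T hT
    rcases Nat.eq_zero_or_pos n with rfl | hn
    · rw [LFkT_zero S hk T hT.2]
      exact Nat.zero_le _
    · rcases hmono with h | h
      · exact case_dec S hk hn hS h T hT
      · exact case_inc S hk hn hS h T hT
  have castbound : ∀ c : ℕ, c ≤ m + 4 * (n * k) → (c : ℝ) ≤ 4 * (m + n * k) := by
    intro c hc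
    have h1 : (c : ℝ) ≤ (m : ℝ) + 4 * (n * k) := by exact_mod_cast hc
    have h2 : (0 : ℝ) ≤ (m : ℝ) := Nat.cast_nonneg m
    push_cast at h1 ⊢
    nlinarith
  constructor
  · intro T hT
    exact castbound _ (main T hT)
  · have h1 : LFk k n S ≤ LFkT k (BTree.spine n 1) S :=
      Nat.sInf_le ⟨BTree.spine n 1, BTree.spine_isBSTOn n, rfl⟩
    have h2 := main (BTree.spine n 1) (BTree.spine_isBSTOn n)
    exact castbound _ (le_trans h1 h2)
end

section
/- There is an absolute constant C > 0 (independent of k, ℓ, n) such that for all integers k, ℓ ≥ 2 and n = kℓ, the tilted grid sequence S_{k,ℓ} satisfies LF^k(S_{k,ℓ}) ≤ C·n. -/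
/-- The tilted grid sequence `S_{k,ℓ} ∈ {1,…,kℓ}^{kℓ}`, given (0-based) by
`s_{(p−1)k+i} = (i−1)ℓ + p` for `p ∈ {1,…,ℓ}`, `i ∈ {1,…,k}`. -/
def tiltedGrid (k l : ℕ) : Fin (k * l) → ℕ :=
  fun t => ((t : ℕ) % k) * l + (t : ℕ) / k + 1

def spineFrom : ℕ → ℕ → BTree
  | _, 0 => .leaf
  | a, m+1 => .node .leaf a (spineFrom (a+1) m)

lemma spine_keys : ∀ m a, (spineFrom a m).keys = Finset.Ico a (a+m) := by
  intro m
  induction m with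
  | zero => intro a; simp [spineFrom, BTree.keys]
  | succ m ih =>
    intro a
    rw [spineFrom, BTree.keys, ih]
    ext y
    simp [BTree.keys, Finset.mem_Ico]
    omega

lemma spine_search : ∀ m a, (spineFrom a m).IsSearchTree := by
  intro m
  induction m with
  | zero => intro a; trivial
  | succ m ih =>
    intro a
    refine ⟨by simp [BTree.keys], ?_, trivial, ih (a+1)⟩
    intro y hy
    rw [spine_keys] at hy
    simp [Finset.mem_Ico] at hy
    omega

lemma spine_dist_self : ∀ m a y, a ≤ y → y < a + m →
    BTree.dist (spineFrom a m) y y = 0 := by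
  intro m
  induction m with
  | zero => intro a y h1 h2; omega
  | succ m ih =>
    intro a y h1 h2
    rw [spineFrom, BTree.dist]
    rcases eq_or_lt_of_le h1 with h | h
    · subst h
      simp [BTree.depth]
    · rw [if_neg (by omega), if_pos ⟨h, h⟩]
      exact ih (a+1) y (by omega) (by omega)

lemma spine_dist_succ : ∀ m a y, a ≤ y → y + 2 ≤ a + m →
    BTree.dist (spineFrom a m) y (y+1) = 1 := by
  intro m
  induction m with
  | zero => intro a y h1 h2; omega
  | succ m ih =>
    intro a y h1 h2
    rw [spineFrom, BTree.dist]
    rcases eq_or_lt_of_le h1 with h | h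
    · subst h
      rw [if_neg (by omega), if_neg (by omega)]
      have hm : 1 ≤ m := by omega
      obtain ⟨m', rfl⟩ : ∃ m', m = m' + 1 := ⟨m - 1, by omega⟩
      simp [BTree.depth, spineFrom]
    · rw [if_neg (by omega), if_pos ⟨h, by omega⟩]
      exact ih (a+1) y (by omega) (by omega)

/-- Position of finger `i` just before time `t` in our strategy. -/
def fpos (k l t i : ℕ) : ℕ := i * l + max 1 (t / k + if i < t % k then 1 else 0)

lemma fpos_succ (k l t i : ℕ) (hk : 0 < k) (hi : i < k) :
    fpos k l (t+1) i = if i = t % k then (t % k) * l + t / k + 1 else fpos k l t i := by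
  have hdm : k * (t / k) + t % k = t := Nat.div_add_mod t k
  have hr : t % k < k := Nat.mod_lt t hk
  have hcase : (t % k + 1 < k ∧ (t+1) / k = t / k ∧ (t+1) % k = t % k + 1)
      ∨ (t % k + 1 = k ∧ (t+1) / k = t / k + 1 ∧ (t+1) % k = 0) := by
    rcases lt_or_ge (t % k + 1) k with h | h
    · exact Or.inl ⟨h, (Nat.div_mod_unique hk).2 ⟨by omega, h⟩⟩
    · refine Or.inr ⟨by omega, (Nat.div_mod_unique hk).2 ⟨?_, hk⟩⟩
      rw [zero_add, Nat.mul_add, Nat.mul_one]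
      omega
  unfold fpos
  rcases hcase with ⟨h0, h1, h2⟩ | ⟨h0, h1, h2⟩ <;> rw [h1, h2] <;>
    by_cases hit : i = t % k
  · subst hit
    rw [if_pos rfl, if_pos (Nat.lt_succ_self _),
      max_eq_right (Nat.le_add_left 1 _), Nat.add_assoc]
  · rw [if_neg hit]
    rcases lt_or_ge i (t % k) with hlt | hge
    · rw [if_pos (by omega), if_pos hlt]
    · rw [if_neg (by omega), if_neg (by omega)]
  · subst hit
    rw [if_pos rfl, if_neg (Nat.not_lt_zero _), Nat.add_zero,
      max_eq_right (Nat.le_add_left 1 _), Nat.add_assoc]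
  · rw [if_neg hit, if_neg (Nat.not_lt_zero _), if_pos (by omega), Nat.add_zero]

lemma fpos_step (k l t : ℕ) (hk : 0 < k) :
    Function.update (fun i : Fin k => fpos k l t i)
        ⟨t % k, Nat.mod_lt t hk⟩ ((t % k) * l + t / k + 1)
      = fun i : Fin k => fpos k l (t+1) i := by
  funext i
  rw [Function.update_apply, fpos_succ k l t i hk i.isLt]
  by_cases h : (i : ℕ) = t % k
  · rw [if_pos (Fin.ext h), if_pos h]
  · rw [if_neg (fun hc => h (by rw [hc])), if_neg h]

lemma serve_bound (k l : ℕ) (hk : 2 ≤ k) (hl : 2 ≤ l) :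
    ∀ c t, t + c = k * l →
      serveFingers (spineFrom 1 (k*l)) (fun i : Fin k => fpos k l t i)
        ((List.range' t c).map (fun j => ((j % k) * l + j / k + 1,
          (⟨j % k, Nat.mod_lt j (by omega)⟩ : Fin k)))) ≤ 2 * c := by
  have hk0 : 0 < k := by omega
  intro c
  induction c with
  | zero => intro t ht; simp [serveFingers]
  | succ c ih =>
    intro t ht
    rw [List.range'_succ, List.map_cons, serveFingers]
    have ht' : t < k * l := by omega
    have hq : t / k < l := Nat.div_lt_of_lt_mul ht'
    have hr : t % k < k := Nat.mod_lt t hk0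
    have hmul : (t % k) * l + l ≤ k * l := by
      have := Nat.mul_le_mul_right l (show t % k + 1 ≤ k by omega)
      rwa [add_one_mul] at this
    have hcoe : (((⟨t % k, Nat.mod_lt t (by omega)⟩ : Fin k)) : ℕ) = t % k := rfl
    have hpos : fpos k l t (((⟨t % k, Nat.mod_lt t (by omega)⟩ : Fin k)) : ℕ)
        = (t % k) * l + max 1 (t / k) := by
      show fpos k l t (t % k) = _
      unfold fpos
      rw [if_neg (lt_irrefl _), Nat.add_zero]
    have hdist : BTree.dist (spineFrom 1 (k*l)) ((t % k) * l + max 1 (t / k))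
        ((t % k) * l + t / k + 1) ≤ 1 := by
      rcases Nat.eq_zero_or_pos (t / k) with h0 | h0
      · rw [h0, max_eq_left (Nat.zero_le _), Nat.add_zero]
        rw [spine_dist_self (k*l) 1 ((t % k) * l + 1) (by omega) (by omega)]
        exact Nat.zero_le 1
      · rw [max_eq_right h0, show (t % k) * l + t / k + 1 = ((t % k) * l + t / k) + 1 from rfl,
          spine_dist_succ (k*l) 1 ((t % k) * l + t / k) (by omega) (by omega)]
    rw [hpos, fpos_step k l t hk0]
    have h2 := ih (t+1) (by omega)
    omega

lemma lfk_tilted_grid_upper_nat (k l : ℕ) (hk : 2 ≤ k) (hl : 2 ≤ l) :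
    LFk k (k * l) (tiltedGrid k l) ≤ 2 * (k * l) := by
  have hk0 : 0 < k := by omega
  have hbst : (spineFrom 1 (k*l)).IsBSTOn (k*l) := by
    refine ⟨spine_search _ _, ?_⟩
    rw [spine_keys]
    ext y
    simp [Finset.mem_Ico, Finset.mem_Icc]
    omega
  have h1 : LFk k (k*l) (tiltedGrid k l) ≤ LFkT k (spineFrom 1 (k*l)) (tiltedGrid k l) :=
    Nat.sInf_le ⟨spineFrom 1 (k*l), hbst, rfl⟩
  have hlist : (List.ofFn fun j : Fin (k*l) => (tiltedGrid k l j,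
        (⟨(j : ℕ) % k, Nat.mod_lt _ hk0⟩ : Fin k)))
      = (List.range' 0 (k*l)).map (fun j => ((j % k) * l + j / k + 1,
          (⟨j % k, Nat.mod_lt j (by omega)⟩ : Fin k))) := by
    apply List.ext_getElem
    · simp
    · intro i hi1 hi2
      simp [tiltedGrid, List.getElem_range']
  have h2 : LFkT k (spineFrom 1 (k*l)) (tiltedGrid k l) ≤ 2 * (k*l) := by
    refine le_trans (Nat.sInf_le ⟨fun i : Fin k => fpos k l 0 i,
      fun j => ⟨(j : ℕ) % k, Nat.mod_lt _ hk0⟩, ?_, rfl⟩) ?_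
    · intro i
      show fpos k l 0 (i : ℕ) ∈ (spineFrom 1 (k*l)).keys
      have hi := i.isLt
      have hmul : (i : ℕ) * l + l ≤ k * l := by
        have := Nat.mul_le_mul_right l (show (i : ℕ) + 1 ≤ k by omega)
        rwa [add_one_mul] at this
      rw [spine_keys]
      have : fpos k l 0 i = (i : ℕ) * l + 1 := by
        unfold fpos
        rw [Nat.zero_div, Nat.zero_mod, if_neg (Nat.not_lt_zero _), Nat.zero_add,
          max_eq_left (Nat.zero_le _)]
      rw [this]
      simp only [Finset.mem_Ico]
      omega
    · rw [hlist]
      exact serve_bound k l hk hl (k*l) 0 (by omega)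
  omega

/-- There is an absolute constant `C > 0` (independent of `k`, `ℓ`, `n`) such that for all
`k, ℓ ≥ 2` and `n = kℓ`, the tilted grid sequence satisfies `LF^k(S_{k,ℓ}) ≤ C·n`. -/
theorem lfk_tilted_grid_upper : ∃ C : ℝ, 0 < C ∧ ∀ (k l : ℕ), 2 ≤ k → 2 ≤ l →
    (LFk k (k * l) (tiltedGrid k l) : ℝ) ≤ C * (k * l : ℕ) := by
  refine ⟨2, by norm_num, ?_⟩
  intro k l hk hl
  have h := lfk_tilted_grid_upper_nat k l hk hl
  have h2 : (LFk k (k * l) (tiltedGrid k l) : ℝ) ≤ ((2 * (k * l) : ℕ) : ℝ) := by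
    exact_mod_cast h
  push_cast at h2 ⊢
  linarith
end
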